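/- arXiv:1911.02072 — 5 statements merged into one kernel-verified Lean document; each statement's English description precedes it below -/
import Mathlib

section
/- Let (x_n) be a wide-(s) sequence in a real Banach space X and let K be the closed convex hull of the set {x_n : n ∈ ℕ}. Then K = { ∑_{n=1}^∞ t_n x_n : t_n ≥ 0 for all n and ∑_{n=1}^∞ t_n = 1 }, where each such series converges in norm. -/
open Filter Topology

noncomputable section

variable {E : Type*} [NormedAddCommGroup E] [NormedSpace ℝ E]

/-- A subset of a normed space is weakly compact if its image under the identity
map into the weak space is compact in the weak topology. -/
def IsWeaklyCompact (C : Set E) : Prop :=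
  IsCompact (toWeakSpace ℝ E '' C)

/-- `z` is the weak limit of the sequence `x`. -/
def WeakLim (x : ℕ → E) (z : E) : Prop :=
  ∀ f : StrongDual ℝ E, Tendsto (fun n => f (x n)) atTop (𝓝 (f z))

/-- The sequence `x` is weakly Cauchy: `(f (x n))` converges for every functional `f`. -/
def WeakCauchySeq (x : ℕ → E) : Prop :=
  ∀ f : StrongDual ℝ E, ∃ l : ℝ, Tendsto (fun n => f (x n)) atTop (𝓝 l)

/-- `f` is affine on the convex set `K`. -/
def AffineOn (K : Set E) (f : E → E) : Prop :=
  ∀ x ∈ K, ∀ y ∈ K, ∀ t : ℝ, 0 ≤ t → t ≤ 1 →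
    f (t • x + (1 - t) • y) = t • f x + (1 - t) • f y

/-- `f` is `L`-bi-Lipschitz on `K`. -/
def IsBiLipschitzOn (L : ℝ) (K : Set E) (f : E → E) : Prop :=
  ∃ c₁ c₂ : ℝ, 0 < c₁ ∧ 0 < c₂ ∧ c₂ / c₁ ≤ L ∧
    ∀ x ∈ K, ∀ y ∈ K,
      c₁ * ‖x - y‖ ≤ ‖f x - f y‖ ∧ ‖f x - f y‖ ≤ c₂ * ‖x - y‖

/-- `f` is uniformly bi-Lipschitz on `K` (all iterates are bi-Lipschitz with the
same constants). -/
def UnifBiLipschitzOn (K : Set E) (f : E → E) : Prop :=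
  ∃ c₁ c₂ : ℝ, 0 < c₁ ∧ 0 < c₂ ∧
    ∀ p : ℕ, ∀ x ∈ K, ∀ y ∈ K,
      c₁ * ‖x - y‖ ≤ ‖f^[p] x - f^[p] y‖ ∧ ‖f^[p] x - f^[p] y‖ ≤ c₂ * ‖x - y‖

/-- `f` is uniformly Lipschitz on `K`. -/
def UnifLipschitzOn (K : Set E) (f : E → E) : Prop :=
  ∃ L : ℝ, 0 < L ∧ ∀ p : ℕ, ∀ x ∈ K, ∀ y ∈ K,
    ‖f^[p] x - f^[p] y‖ ≤ L * ‖x - y‖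

/-- `θ(f) = inf { liminf_n ‖x - fⁿ(y)‖ : x, y ∈ K }`. -/
def fpTheta (K : Set E) (f : E → E) : ℝ :=
  sInf {r : ℝ | ∃ x ∈ K, ∃ y ∈ K, r = Filter.liminf (fun n => ‖x - f^[n] y‖) atTop}

/-- `x` is a basic sequence with basis constant `𝒦`. -/
def IsBasicSeq (x : ℕ → E) (𝒦 : ℝ) : Prop :=
  (∀ n, x n ≠ 0) ∧ 1 ≤ 𝒦 ∧
    ∀ m n : ℕ, m ≤ n → ∀ a : ℕ → ℝ,
      ‖∑ i ∈ Finset.range m, a i • x i‖ ≤ 𝒦 * ‖∑ i ∈ Finset.range n, a i • x i‖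

/-- `x` is seminormalized. -/
def Seminormalized (x : ℕ → E) : Prop :=
  ∃ a b : ℝ, 0 < a ∧ ∀ n, a ≤ ‖x n‖ ∧ ‖x n‖ ≤ b

/-- `x` dominates the summing basis of `c₀` with constant `c`. -/
def DominatesSummingBasis (x : ℕ → E) (c : ℝ) : Prop :=
  ∀ m : ℕ, ∀ a : ℕ → ℝ, ∀ k ≤ m,
    c * |∑ i ∈ Finset.Icc k m, a i| ≤ ‖∑ i ∈ Finset.range (m + 1), a i • x i‖

/-- `x` is a wide-(s) sequence. -/
def IsWideS (x : ℕ → E) : Prop :=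
  Seminormalized x ∧ (∃ 𝒦, IsBasicSeq x 𝒦) ∧ ∃ c > 0, DominatesSummingBasis x c

/-- `x` is equivalent to the summing basis of `c₀`. -/
def EquivSummingBasis (x : ℕ → E) : Prop :=
  ∃ L : ℝ, 1 ≤ L ∧ ∀ m : ℕ, ∀ a : ℕ → ℝ,
    (∀ k ≤ m, (1 / L) * |∑ i ∈ Finset.Icc k m, a i| ≤
      ‖∑ i ∈ Finset.range (m + 1), a i • x i‖) ∧
    ‖∑ i ∈ Finset.range (m + 1), a i • x i‖ ≤
      L * (Finset.range (m + 1)).sup' Finset.nonempty_range_add_one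
        (fun k => |∑ i ∈ Finset.Icc k m, a i|)

/-- `x` is an `ℓ₁`-sequence. -/
def IsL1Seq (x : ℕ → E) : Prop :=
  ∃ c C : ℝ, 0 < c ∧ 0 < C ∧ ∀ m : ℕ, ∀ a : ℕ → ℝ,
    c * ∑ i ∈ Finset.range m, |a i| ≤ ‖∑ i ∈ Finset.range m, a i • x i‖ ∧
    ‖∑ i ∈ Finset.range m, a i • x i‖ ≤ C * ∑ i ∈ Finset.range m, |a i|

/-- `w` is a convex block sequence of `x`. -/
def IsConvexBlockSeq (w x : ℕ → E) : Prop :=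
  ∃ (F : ℕ → Finset ℕ) (lam : ℕ → ℝ),
    (∀ j, (F j).Nonempty) ∧
    (∀ j, ∀ i ∈ F j, ∀ i' ∈ F (j + 1), i < i') ∧
    (∀ i, 0 ≤ lam i) ∧
    (∀ j, ∑ i ∈ F j, lam i = 1) ∧
    (∀ j, w j = ∑ i ∈ F j, lam i • x i)

/-- Sequences `u` and `v` are `L`-equivalent. -/
def SeqEquiv (L : ℝ) (u v : ℕ → E) : Prop :=
  ∀ m : ℕ, ∀ a : ℕ → ℝ,
    (1 / L) * ‖∑ i ∈ Finset.range m, a i • u i‖ ≤ ‖∑ i ∈ Finset.range m, a i • v i‖ ∧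
    ‖∑ i ∈ Finset.range m, a i • v i‖ ≤ L * ‖∑ i ∈ Finset.range m, a i • u i‖

/-- `w` is uniformly `L`-shift equivalent: each shifted sequence `(w (n + p))ₙ`
is `L`-equivalent to `w`. -/
def UnifShiftEquiv (L : ℝ) (w : ℕ → E) : Prop :=
  ∀ p : ℕ, SeqEquiv L (fun n => w (n + p)) w

/-- A basic sequence is convex block shiftable if some subsequence has all of its
convex block sequences uniformly `L`-shift equivalent, for a single `L`. -/
def ConvexBlockShiftable (x : ℕ → E) : Prop :=
  (∃ 𝒦, IsBasicSeq x 𝒦) ∧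
  ∃ L : ℝ, 0 < L ∧ ∃ φ : ℕ → ℕ, StrictMono φ ∧
    ∀ w : ℕ → E, IsConvexBlockSeq w (x ∘ φ) → UnifShiftEquiv L w

/-- Pełczyński's property (u). -/
def PropertyU (E : Type*) [NormedAddCommGroup E] [NormedSpace ℝ E] : Prop :=
  ∀ x : ℕ → E, WeakCauchySeq x →
    ∃ y : ℕ → E,
      (∀ f : StrongDual ℝ E, Summable fun n => |f (y n)|) ∧
      WeakLim (fun n => x n - ∑ i ∈ Finset.range (n + 1), y i) 0

/-- Property (su). -/
def PropertySU (E : Type*) [NormedAddCommGroup E] [NormedSpace ℝ E] : Prop :=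
  ∀ x : ℕ → E, WeakCauchySeq x → ¬(∃ z, WeakLim x z) →
    ∃ w : ℕ → E, ConvexBlockShiftable w ∧ WeakLim (fun n => x n - w n) 0


/-!
Convex series lie in the closed convex hull because their normalized partial sums are finite
convex combinations of the `xₙ`. Conversely, let finite convex combinations `v j = ∑ tⱼₙ xₙ`
converge to `y`. Domination of the summing basis bounds the distance between the coefficient
partial sums `∑_{n<k} tᵢₙ` and `∑_{n<k} tⱼₙ` by `c⁻¹ ‖v i - v j‖`, uniformly in `k`; hence the
coefficients converge to some `sₙ ≥ 0` with `∑ sₙ = 1`. The basis constant `𝒦` bounds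
`‖∑_{n<m} (tⱼₙ - sₙ) xₙ‖` by `𝒦 ‖v j - y‖`, and for `m` past the support of `tⱼ` this says that
the partial sums of `∑ sₙ xₙ` stay within `(𝒦 + 1) ‖v j - y‖` of `y`.
-/

open Finset

section DominatedDistances

variable {α β : Type*} [PseudoMetricSpace α] [PseudoMetricSpace β] {F : ℕ → α} {v : ℕ → β}
  {C : ℝ}

theorem cauchySeq_of_dist_le_mul_dist (hv : CauchySeq v)
    (h : ∀ i j, dist (F i) (F j) ≤ C * dist (v i) (v j)) : CauchySeq F := by
  rw [cauchySeq_iff_tendsto_dist_atTop_0] at hv ⊢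
  exact squeeze_zero (fun _ => dist_nonneg) (fun p => h p.1 p.2) (by simpa using hv.const_mul C)

theorem dist_le_mul_dist_of_tendsto {a : α} {y : β} (hF : Tendsto F atTop (𝓝 a))
    (hv : Tendsto v atTop (𝓝 y)) {j : ℕ} (h : ∀ i, dist (F j) (F i) ≤ C * dist (v j) (v i)) :
    dist (F j) a ≤ C * dist (v j) y :=
  le_of_tendsto_of_tendsto' (tendsto_const_nhds.dist hF)
    ((tendsto_const_nhds.dist hv).const_mul C) h

end DominatedDistances

theorem tendsto_of_eventually_dist_le {α γ ι : Type*} [PseudoMetricSpace α] {l : Filter γ}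
    {l' : Filter ι} [l'.NeBot] {u : γ → α} {a : α} {r : ι → ℝ} (hr : Tendsto r l' (𝓝 0))
    (h : ∀ j, ∀ᶠ m in l, dist (u m) a ≤ r j) : Tendsto u l (𝓝 a) := by
  refine Metric.tendsto_nhds.2 fun ε hε => ?_
  obtain ⟨j, hj⟩ := (hr.eventually (gt_mem_nhds hε)).exists
  exact (h j).mono fun m hm => hm.trans_lt hj

theorem mem_closure_convexHull_range_of_tendsto {V : Type*} [AddCommGroup V] [Module ℝ V]
    [TopologicalSpace V] [ContinuousSMul ℝ V] {x : ℕ → V} {t : ℕ → ℝ} {y : V}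
    (ht0 : ∀ n, 0 ≤ t n) (ht1 : Tendsto (fun m => ∑ n ∈ range m, t n) atTop (𝓝 1))
    (hy : Tendsto (fun m => ∑ n ∈ range m, t n • x n) atTop (𝓝 y)) :
    y ∈ closure (convexHull ℝ (Set.range x)) := by
  refine mem_closure_of_tendsto (b := atTop) (f := fun m => (range m).centerMass t x) ?_ ?_
  · simpa [Finset.centerMass] using (ht1.inv₀ one_ne_zero).smul hy
  · filter_upwards [ht1.eventually (lt_mem_nhds one_pos)] with m hm
    exact (range m).centerMass_mem_convexHull (fun n _ => ht0 n) hm fun n _ => Set.mem_range_self n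

theorem exists_sum_range_eq_of_mem_convexHull_range {V : Type*} [AddCommGroup V] [Module ℝ V]
    {x : ℕ → V} {y : V} (hy : y ∈ convexHull ℝ (Set.range x)) :
    ∃ (t : ℕ → ℝ) (N : ℕ), (∀ n, 0 ≤ t n) ∧ (∀ n ≥ N, t n = 0) ∧
      ∑ n ∈ range N, t n = 1 ∧ ∑ n ∈ range N, t n • x n = y := by
  rw [convexHull_range_eq_exists_affineCombination] at hy
  obtain ⟨s, w, hw0, hw1, rfl⟩ := hy
  obtain ⟨N, hsN⟩ := s.exists_nat_subset_range
  refine ⟨Set.indicator s w, N, fun n => Set.indicator_nonneg hw0 n,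
    fun n hn => Set.indicator_of_notMem (fun h => (mem_range.1 (hsN h)).not_ge hn) _, ?_, ?_⟩
  · rw [sum_indicator_subset _ hsN, hw1]
  · rw [affineCombination_eq_linear_combination s x w hw1, ← sum_indicator_subset _ hsN]
    exact sum_congr rfl fun n _ => (Set.indicator_smul_apply_left _ _ _ _).symm

theorem IsBasicSeq.dist_sum_range_le {x : ℕ → E} {𝒦 : ℝ} (hx : IsBasicSeq x 𝒦)
    {a b : ℕ → ℝ} {Na Nb : ℕ} (ha : ∀ n ≥ Na, a n = 0) (hb : ∀ n ≥ Nb, b n = 0) (m : ℕ) :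
    dist (∑ n ∈ range m, a n • x n) (∑ n ∈ range m, b n • x n) ≤
      𝒦 * dist (∑ n ∈ range Na, a n • x n) (∑ n ∈ range Nb, b n • x n) := by
  rw [← eventually_constant_sum (fun n hn => by simp [ha n hn]) (le_max_left Na Nb),
    ← eventually_constant_sum (fun n hn => by simp [hb n hn]) (le_max_right Na Nb)]
  set N := max Na Nb
  have hab : ∀ n ≥ N, (a n - b n) • x n = 0 := fun n hn => by
    simp [ha n (le_of_max_le_left hn), hb n (le_of_max_le_right hn)]
  simp only [dist_eq_norm, ← sum_sub_distrib, ← sub_smul]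
  rw [← eventually_constant_sum hab (le_max_right m N)]
  exact hx.2.2 m (max m N) (le_max_left m N) (a - b)

theorem DominatesSummingBasis.dist_sum_range_le {x : ℕ → E} {c : ℝ}
    (hx : DominatesSummingBasis x c) (hc : 0 < c) {a b : ℕ → ℝ} {Na Nb : ℕ}
    (ha : ∀ n ≥ Na, a n = 0) (hb : ∀ n ≥ Nb, b n = 0)
    (hab : ∑ n ∈ range Na, a n = ∑ n ∈ range Nb, b n) (k : ℕ) :
    dist (∑ n ∈ range k, a n) (∑ n ∈ range k, b n) ≤
      c⁻¹ * dist (∑ n ∈ range Na, a n • x n) (∑ n ∈ range Nb, b n • x n) := by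
  rw [← eventually_constant_sum ha (le_max_left Na Nb),
    ← eventually_constant_sum hb (le_max_right Na Nb)] at hab
  rw [← eventually_constant_sum (fun n hn => by simp [ha n hn]) (le_max_left Na Nb),
    ← eventually_constant_sum (fun n hn => by simp [hb n hn]) (le_max_right Na Nb),
    le_inv_mul_iff₀ hc]
  set N := max Na Nb
  have hd : ∀ n ≥ N, (a - b) n = 0 := fun n hn => by
    simp [ha n (le_of_max_le_left hn), hb n (le_of_max_le_right hn)]
  have hdx : ∀ n ≥ N, (a - b) n • x n = 0 := fun n hn => by simp [hd n hn]
  have hM : N ≤ max k N + 1 := by omega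
  -- `a - b` sums to zero, so its tail over `[k, max k N]` is minus its partial sum below `k`.
  have key := hx (max k N) (a - b) k (le_max_left k N)
  rw [← Finset.Ico_add_one_right_eq_Icc, sum_Ico_eq_sub _ (by omega),
    eventually_constant_sum hd hM, eventually_constant_sum hdx hM] at key
  simpa [dist_eq_norm, Real.dist_eq, sum_sub_distrib, sub_smul, hab, abs_sub_comm] using key

theorem exists_convex_series_of_tendsto {x : ℕ → E} {𝒦 c : ℝ} (hK : IsBasicSeq x 𝒦)
    (hd : DominatesSummingBasis x c) (hc : 0 < c) {t : ℕ → ℕ → ℝ} {N : ℕ → ℕ} {v : ℕ → E}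
    {y : E} (ht0 : ∀ j n, 0 ≤ t j n) (htN : ∀ j, ∀ n ≥ N j, t j n = 0)
    (ht1 : ∀ j, ∑ n ∈ range (N j), t j n = 1)
    (htv : ∀ j, ∑ n ∈ range (N j), t j n • x n = v j) (hv : Tendsto v atTop (𝓝 y)) :
    ∃ s : ℕ → ℝ, (∀ n, 0 ≤ s n) ∧ Tendsto (fun m => ∑ n ∈ range m, s n) atTop (𝓝 1) ∧
      Tendsto (fun m => ∑ n ∈ range m, s n • x n) atTop (𝓝 y) := by
  have hvec : ∀ m i j, dist (∑ n ∈ range m, t i n • x n) (∑ n ∈ range m, t j n • x n) ≤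
      𝒦 * dist (v i) (v j) := fun m i j => by
    simpa only [htv] using hK.dist_sum_range_le (htN i) (htN j) m
  have hpartial : ∀ k i j, dist (∑ n ∈ range k, t i n) (∑ n ∈ range k, t j n) ≤
      c⁻¹ * dist (v i) (v j) := fun k i j => by
    simpa only [htv] using hd.dist_sum_range_le hc (htN i) (htN j) ((ht1 i).trans (ht1 j).symm) k
  have hcoef : ∀ n i j, dist (t i n) (t j n) ≤ 2 * c⁻¹ * dist (v i) (v j) := fun n i j => by
    rw [← sum_range_succ_sub_sum (t i), ← sum_range_succ_sub_sum (t j)]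
    linarith [dist_sub_sub_le (∑ l ∈ range (n + 1), t i l) (∑ l ∈ range n, t i l)
      (∑ l ∈ range (n + 1), t j l) (∑ l ∈ range n, t j l), hpartial (n + 1) i j, hpartial n i j]
  choose s hs using fun n =>
    cauchySeq_tendsto_of_complete (cauchySeq_of_dist_le_mul_dist hv.cauchySeq (hcoef n))
  have hr : ∀ C : ℝ, Tendsto (fun j => C * dist (v j) y) atTop (𝓝 0) := fun C => by
    simpa using (tendsto_iff_dist_tendsto_zero.1 hv).const_mul C
  refine ⟨s, fun n => ge_of_tendsto' (hs n) (ht0 · n), ?_, ?_⟩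
  · refine tendsto_of_eventually_dist_le (hr c⁻¹) fun j => ?_
    filter_upwards [eventually_ge_atTop (N j)] with k hk
    rw [dist_comm, ← ht1 j, ← eventually_constant_sum (htN j) hk]
    exact dist_le_mul_dist_of_tendsto (tendsto_finsetSum _ fun n _ => hs n) hv (hpartial k j)
  · refine tendsto_of_eventually_dist_le (hr (𝒦 + 1)) fun j => ?_
    filter_upwards [eventually_ge_atTop (N j)] with m hm
    have hvj := dist_le_mul_dist_of_tendsto
      (tendsto_finsetSum _ fun n _ => (hs n).smul_const (x n)) hv (hvec m j)
    rw [eventually_constant_sum (fun n hn => by simp [htN j n hn]) hm, htv] at hvj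
    linarith [dist_triangle_left (∑ n ∈ range m, s n • x n) y (v j)]

theorem closedConvexHull_eq_series_of_wideS_general
    {X : Type*} [NormedAddCommGroup X] [NormedSpace ℝ X]
    (x : ℕ → X) (hx : IsWideS x) :
    closure (convexHull ℝ (Set.range x)) =
      {y : X | ∃ t : ℕ → ℝ, (∀ n, 0 ≤ t n) ∧
        Tendsto (fun m => ∑ n ∈ Finset.range m, t n) atTop (𝓝 (1 : ℝ)) ∧
        Tendsto (fun m => ∑ n ∈ Finset.range m, t n • x n) atTop (𝓝 y)} := by
  obtain ⟨-, ⟨𝒦, hK⟩, c, hc, hd⟩ := hx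
  refine subset_antisymm (fun y hy => ?_) fun y ⟨t, ht0, ht1, hy⟩ =>
    mem_closure_convexHull_range_of_tendsto ht0 ht1 hy
  obtain ⟨v, hvK, hv⟩ := mem_closure_iff_seq_limit.1 hy
  choose t N ht0 htN ht1 htv using fun j => exists_sum_range_eq_of_mem_convexHull_range (hvK j)
  exact exists_convex_series_of_tendsto hK hd hc ht0 htN ht1 htv hv

/-- If `x` is a wide-(s) sequence, then the closed convex hull of its
range is exactly the set of norm-convergent sums `∑ tₙ xₙ` with `tₙ ≥ 0` and
`∑ tₙ = 1`. -/
theorem closedConvexHull_eq_series_of_wideS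
    {X : Type*} [NormedAddCommGroup X] [NormedSpace ℝ X] [CompleteSpace X]
    (x : ℕ → X) (hx : IsWideS x) :
    closure (convexHull ℝ (Set.range x)) =
      {y : X | ∃ t : ℕ → ℝ, (∀ n, 0 ≤ t n) ∧
        Tendsto (fun m => ∑ n ∈ Finset.range m, t n) atTop (𝓝 (1 : ℝ)) ∧
        Tendsto (fun m => ∑ n ∈ Finset.range m, t n • x n) atTop (𝓝 y)} :=
  closedConvexHull_eq_series_of_wideS_general x hx

end
end

section
/- Let (x_n) be a basic sequence in a real Banach space X with basis constant 𝒦 and suppose 0 < a ≤ ‖x_n‖ ≤ b for all n. Let θ ∈ (0,1) and let (α_n) be positive reals with (4b𝒦/a) ∑_{n=1}^∞ α_n ≤ θ. Define z_n = (1 − α_n) x_n + α_n x_{n+1}. Then (z_n) is a basic sequence and (1 − θ)‖∑_{n} t_n x_n‖ ≤ ‖∑_{n} t_n z_n‖ ≤ (1 + θ)‖∑_{n} t_n x_n‖ whenever the series ∑_n t_n x_n converges in norm. -/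
open Filter Topology

noncomputable section

variable {E : Type*} [NormedAddCommGroup E] [NormedSpace ℝ E]

/-! The basis constant bounds every coefficient: `|cᵢ| a ≤ ‖cᵢ xᵢ‖ ≤ 2𝒦 ‖∑_{j<n} cⱼ xⱼ‖`
for `i < n`. As `‖zᵢ - xᵢ‖ ≤ 2b αᵢ`, the partial sums of `∑ cᵢ zᵢ` and `∑ cᵢ xᵢ` up to `m ≤ n`
differ by at most `(4b𝒦/a) ∑ αᵢ · ‖∑_{j<n} cⱼ xⱼ‖ ≤ θ ‖∑_{j<n} cⱼ xⱼ‖`; this yields the basis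
inequality for `(zₙ)` with constant `(𝒦 + θ)/(1 - θ)`. For a convergent expansion
`s = ∑ tₙ xₙ` the same coefficient bound makes `∑ tₙ (zₙ - xₙ)` absolutely convergent, with sum
of norm at most `θ ‖s‖`. -/

open Finset

lemma norm_one_sub_smul_add_smul_sub_le {u w : E} {α b : ℝ} (hα : 0 ≤ α)
    (hu : ‖u‖ ≤ b) (hw : ‖w‖ ≤ b) : ‖((1 - α) • u + α • w) - u‖ ≤ 2 * b * α := by
  have hdiff : (1 - α) • u + α • w - u = α • (w - u) := by module
  rw [hdiff, norm_smul, Real.norm_of_nonneg hα]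
  nlinarith [norm_sub_le w u]

lemma norm_smul_le_of_norm_smul_le {c a M β : ℝ} {u w : E} (ha : 0 < a) (hu : a ≤ ‖u‖)
    (hw : ‖w‖ ≤ β) (hcu : ‖c • u‖ ≤ M) : ‖c • w‖ ≤ M / a * β := by
  rw [norm_smul] at hcu ⊢
  have hc : ‖c‖ ≤ M / a := by
    rw [le_div_iff₀ ha]
    nlinarith [norm_nonneg c]
  exact mul_le_mul hc hw (norm_nonneg w) ((norm_nonneg c).trans hc)

namespace IsBasicSeq

variable {u v : ℕ → E} {𝒦 a θ : ℝ} {β : ℕ → ℝ}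

lemma norm_smul_le (hu : IsBasicSeq u 𝒦) (c : ℕ → ℝ) {i n : ℕ} (hin : i < n) :
    ‖c i • u i‖ ≤ 2 * 𝒦 * ‖∑ j ∈ range n, c j • u j‖ := by
  have hsucc := hu.2.2 (i + 1) n hin c
  have hi := hu.2.2 i n hin.le c
  calc ‖c i • u i‖
      = ‖∑ j ∈ range (i + 1), c j • u j - ∑ j ∈ range i, c j • u j‖ := by
        rw [sum_range_succ, add_sub_cancel_left]
    _ ≤ ‖∑ j ∈ range (i + 1), c j • u j‖ + ‖∑ j ∈ range i, c j • u j‖ := norm_sub_le _ _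
    _ ≤ 2 * 𝒦 * ‖∑ j ∈ range n, c j • u j‖ := by linarith

lemma norm_smul_le_of_tendsto (hu : IsBasicSeq u 𝒦) {t : ℕ → ℝ} {s : E}
    (hs : Tendsto (fun n => ∑ j ∈ range n, t j • u j) atTop (𝓝 s)) (i : ℕ) :
    ‖t i • u i‖ ≤ 2 * 𝒦 * ‖s‖ :=
  ge_of_tendsto (hs.norm.const_mul _) <|
    (eventually_gt_atTop i).mono fun _ hin => hu.norm_smul_le t hin

lemma norm_sum_smul_sub_le (hu : IsBasicSeq u 𝒦) (ha : 0 < a) (hua : ∀ i, a ≤ ‖u i‖)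
    (hβ : ∀ i, ‖v i - u i‖ ≤ β i) (hβsum : Summable β) (hθ : 2 * 𝒦 / a * ∑' i, β i ≤ θ)
    {m n : ℕ} (hmn : m ≤ n) (c : ℕ → ℝ) :
    ‖∑ i ∈ range m, c i • v i - ∑ i ∈ range m, c i • u i‖ ≤
      θ * ‖∑ i ∈ range n, c i • u i‖ := by
  set S := ‖∑ i ∈ range n, c i • u i‖
  have hβ₀ : ∀ i, 0 ≤ β i := fun i => (norm_nonneg _).trans (hβ i)
  have hterm : ∀ i ∈ range m, ‖c i • (v i - u i)‖ ≤ 2 * 𝒦 * S / a * β i := fun i hi =>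
    norm_smul_le_of_norm_smul_le ha (hua i) (hβ i)
      (hu.norm_smul_le c ((mem_range.mp hi).trans_le hmn))
  have htail : 2 * 𝒦 / a * ∑ i ∈ range m, β i ≤ θ :=
    le_trans (mul_le_mul_of_nonneg_left (hβsum.sum_le_tsum _ fun i _ => hβ₀ i)
      (div_nonneg (by linarith [hu.2.1]) ha.le)) hθ
  calc ‖∑ i ∈ range m, c i • v i - ∑ i ∈ range m, c i • u i‖
      = ‖∑ i ∈ range m, c i • (v i - u i)‖ := by simp only [smul_sub, sum_sub_distrib]
    _ ≤ ∑ i ∈ range m, 2 * 𝒦 * S / a * β i := norm_sum_le_of_le _ hterm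
    _ = (2 * 𝒦 / a * ∑ i ∈ range m, β i) * S := by rw [← mul_sum]; ring
    _ ≤ θ * S := by gcongr

lemma of_norm_sum_sub_le (hu : IsBasicSeq u 𝒦) (hθ₀ : 0 ≤ θ) (hθ₁ : θ < 1)
    (hclose : ∀ m n, m ≤ n → ∀ c : ℕ → ℝ,
      ‖∑ i ∈ range m, c i • v i - ∑ i ∈ range m, c i • u i‖ ≤
        θ * ‖∑ i ∈ range n, c i • u i‖) :
    IsBasicSeq v ((𝒦 + θ) / (1 - θ)) := by
  have hpos : 0 < 1 - θ := by linarith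
  have hlower : ∀ n (c : ℕ → ℝ),
      (1 - θ) * ‖∑ i ∈ range n, c i • u i‖ ≤ ‖∑ i ∈ range n, c i • v i‖ := fun n c => by
    linarith [hclose n n le_rfl c,
      norm_le_norm_add_norm_sub (∑ i ∈ range n, c i • v i) (∑ i ∈ range n, c i • u i)]
  refine ⟨fun k hk => hu.1 k ?_, ?_, fun m n hmn c => ?_⟩
  · have hk' := hlower (k + 1) fun i => if i = k then 1 else 0
    simp only [ite_smul, one_smul, zero_smul, sum_ite_eq', mem_range, Nat.lt_succ_self,
      if_true, hk, norm_zero] at hk'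
    exact norm_eq_zero.mp (le_antisymm (nonpos_of_mul_nonpos_right hk' hpos) (norm_nonneg _))
  · rw [le_div_iff₀ hpos]
    linarith [hu.2.1]
  · calc ‖∑ i ∈ range m, c i • v i‖
        ≤ ‖∑ i ∈ range m, c i • u i‖ +
            ‖∑ i ∈ range m, c i • v i - ∑ i ∈ range m, c i • u i‖ :=
          norm_le_norm_add_norm_sub' _ _
      _ ≤ (𝒦 + θ) * ‖∑ i ∈ range n, c i • u i‖ := by
          linarith [hu.2.2 m n hmn c, hclose m n hmn c]
      _ = (𝒦 + θ) / (1 - θ) * ((1 - θ) * ‖∑ i ∈ range n, c i • u i‖) := by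
          field_simp
      _ ≤ (𝒦 + θ) / (1 - θ) * ‖∑ i ∈ range n, c i • v i‖ := by
          gcongr
          · exact div_nonneg (by linarith [hu.2.1]) hpos.le
          · exact hlower n c

lemma exists_tendsto_sum_smul (hu : IsBasicSeq u 𝒦) (ha : 0 < a) (hua : ∀ i, a ≤ ‖u i‖)
    (hβ : ∀ i, ‖v i - u i‖ ≤ β i) (hβsum : Summable β) (hθ : 2 * 𝒦 / a * ∑' i, β i ≤ θ)
    [CompleteSpace E] {t : ℕ → ℝ} {s : E}
    (hs : Tendsto (fun n => ∑ i ∈ range n, t i • u i) atTop (𝓝 s)) :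
    ∃ s', Tendsto (fun n => ∑ i ∈ range n, t i • v i) atTop (𝓝 s') ∧ ‖s' - s‖ ≤ θ * ‖s‖ := by
  have hterm : ∀ i, ‖t i • (v i - u i)‖ ≤ 2 * 𝒦 * ‖s‖ / a * β i := fun i =>
    norm_smul_le_of_norm_smul_le ha (hua i) (hβ i) (hu.norm_smul_le_of_tendsto hs i)
  have hmajor : HasSum (fun i => 2 * 𝒦 * ‖s‖ / a * β i) (2 * 𝒦 * ‖s‖ / a * ∑' i, β i) :=
    hβsum.hasSum.mul_left _
  obtain ⟨d, hd⟩ := hmajor.summable.of_norm_bounded hterm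
  refine ⟨s + d, ?_, ?_⟩
  · refine (hs.add hd.tendsto_sum_nat).congr fun n => ?_
    simp only [← sum_add_distrib, smul_sub, add_sub_cancel]
  · calc ‖s + d - s‖ = ‖d‖ := by rw [add_sub_cancel_left]
      _ ≤ 2 * 𝒦 * ‖s‖ / a * ∑' i, β i := hd.norm_le_of_bounded hmajor hterm
      _ = (2 * 𝒦 / a * ∑' i, β i) * ‖s‖ := by ring
      _ ≤ θ * ‖s‖ := by gcongr

end IsBasicSeq

/-- small perturbation of a basic sequence by convex combinations:
`zₙ = (1 - αₙ) xₙ + αₙ x_{n+1}` is a basic sequence and is `(1 ± θ)`-equivalent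
to `x` on convergent series, provided `(4b𝒦/a) ∑ αₙ ≤ θ`. -/
theorem perturbed_basicSeq_equiv
    {X : Type*} [NormedAddCommGroup X] [NormedSpace ℝ X] [CompleteSpace X]
    (x : ℕ → X) (𝒦 a b θ : ℝ) (α : ℕ → ℝ)
    (hbasic : IsBasicSeq x 𝒦) (ha : 0 < a)
    (hnorm : ∀ n, a ≤ ‖x n‖ ∧ ‖x n‖ ≤ b)
    (hθ₀ : 0 < θ) (hθ₁ : θ < 1)
    (hα : ∀ n, 0 < α n) (hsum : Summable α)
    (hbound : 4 * b * 𝒦 / a * ∑' n, α n ≤ θ)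
    (z : ℕ → X) (hz : ∀ n, z n = (1 - α n) • x n + α n • x (n + 1)) :
    (∃ 𝒦' : ℝ, IsBasicSeq z 𝒦') ∧
      ∀ (t : ℕ → ℝ) (s : X),
        Tendsto (fun m => ∑ n ∈ Finset.range m, t n • x n) atTop (𝓝 s) →
        ∃ s' : X,
          Tendsto (fun m => ∑ n ∈ Finset.range m, t n • z n) atTop (𝓝 s') ∧
          (1 - θ) * ‖s‖ ≤ ‖s'‖ ∧ ‖s'‖ ≤ (1 + θ) * ‖s‖ := by
  have hxa : ∀ n, a ≤ ‖x n‖ := fun n => (hnorm n).1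
  have hzx : ∀ n, ‖z n - x n‖ ≤ 2 * b * α n := fun n => by
    rw [hz n]
    exact norm_one_sub_smul_add_smul_sub_le (hα n).le (hnorm n).2 (hnorm (n + 1)).2
  have hθ : 2 * 𝒦 / a * ∑' n, 2 * b * α n ≤ θ :=
    calc 2 * 𝒦 / a * ∑' n, 2 * b * α n = 4 * b * 𝒦 / a * ∑' n, α n := by
          rw [tsum_mul_left]; ring
      _ ≤ θ := hbound
  have hβsum : Summable fun n => 2 * b * α n := hsum.mul_left _
  refine ⟨⟨_, hbasic.of_norm_sum_sub_le hθ₀.le hθ₁ fun m n hmn c =>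
    hbasic.norm_sum_smul_sub_le ha hxa hzx hβsum hθ hmn c⟩, fun t s hs => ?_⟩
  obtain ⟨s', hs', hclose⟩ := hbasic.exists_tendsto_sum_smul ha hxa hzx hβsum hθ hs
  have hdist := (abs_norm_sub_norm_le s' s).trans hclose
  rw [abs_le] at hdist
  exact ⟨s', hs', by linarith [hdist.1], by linarith [hdist.2]⟩

end
end

section
/- Let X be a real Banach space with Pełczyński's property (u). Then every non-trivial weak Cauchy sequence in X has a convex block sequence that is equivalent to the summing basis of c₀. -/
open Filter Topology

noncomputable section

variable {E : Type*} [NormedAddCommGroup E] [NormedSpace ℝ E]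

/-!
Property (u) splits `x n = s n + z n` with `z` weakly null and `s n = ∑ i ≤ n, y i` the partial
sums of a weakly unconditionally Cauchy series; by Abel summation, convex blocks of `(s n)` are
dominated by the summing basis. For the lower estimate, the weak* limit `Λ ∈ X**` of `(x n)` lies
at a positive distance `θ` from `X` (as `X` is complete and `x` does not converge weakly), so for
any finitely many vectors there is a functional of norm `≤ 1` killing them with `Λ f > θ`. One
then chooses recursively functionals `f j` killing the earlier blocks and, by Mazur's lemma,
convex blocks `w j` far out along `x` that are close to the matching blocks of `(s n)` and on
which all `f k`, `k ≤ j`, are nearly `Λ (f k)`. Then `f k (∑ a j • w j) ≈ Λ (f k) * ∑ j ≥ k, a j`.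
-/

open NormedSpace

section

open Finset

variable {X : Type*} [NormedAddCommGroup X] [NormedSpace ℝ X]

theorem exists_norm_le_of_forall_dual_bounded {ι : Type*} (v : ι → X)
    (h : ∀ f : StrongDual ℝ X, ∃ C, ∀ i, |f (v i)| ≤ C) : ∃ B, ∀ i, ‖v i‖ ≤ B := by
  obtain ⟨B, hB⟩ := banach_steinhaus (g := fun i => inclusionInDoubleDual ℝ X (v i)) h
  exact ⟨B, fun i => (inclusionInDoubleDualLi ℝ (E := X)).norm_map (v i) ▸ hB i⟩

theorem exists_norm_sum_smul_le_of_summable_abs {y : ℕ → X}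
    (hy : ∀ f : StrongDual ℝ X, Summable fun n => |f (y n)|) :
    ∃ C, ∀ (A : Finset ℕ) (c : ℕ → ℝ) (M : ℝ), (∀ i, |c i| ≤ M) →
      ‖∑ i ∈ A, c i • y i‖ ≤ C * M := by
  obtain ⟨C, hC⟩ := exists_norm_le_of_forall_dual_bounded
    (fun q : {q : Finset ℕ × (ℕ → ℝ) // ∀ i, |q.2 i| ≤ 1} => ∑ i ∈ q.1.1, q.1.2 i • y i)
    fun f => ⟨∑' n, |f (y n)|, fun q => by
      simp only [map_sum, map_smul, smul_eq_mul]
      calc |∑ i ∈ q.1.1, q.1.2 i * f (y i)| ≤ ∑ i ∈ q.1.1, |f (y i)| := by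
            refine (abs_sum_le_sum_abs _ _).trans (sum_le_sum fun i _ => ?_)
            rw [abs_mul]
            exact mul_le_of_le_one_left (abs_nonneg _) (q.2 i)
        _ ≤ ∑' n, |f (y n)| := (hy f).sum_le_tsum _ fun i _ => abs_nonneg _⟩
  refine ⟨C, fun A c M hc => ?_⟩
  obtain hM | hM := ((abs_nonneg (c 0)).trans (hc 0)).eq_or_lt
  · have hc0 : ∀ i, c i = 0 := fun i => abs_eq_zero.1 (le_antisymm (hM ▸ hc i) (abs_nonneg _))
    simp [hc0, ← hM]
  · have hcM : ∀ i, |c i / M| ≤ 1 := fun i => by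
      rw [abs_div, abs_of_pos hM, div_le_one hM]
      exact hc i
    calc ‖∑ i ∈ A, c i • y i‖ = ‖M • ∑ i ∈ A, (c i / M) • y i‖ := by
          simp_rw [smul_sum, smul_smul, mul_div_cancel₀ _ hM.ne']
      _ = M * ‖∑ i ∈ A, (c i / M) • y i‖ := by rw [norm_smul, Real.norm_of_nonneg hM.le]
      _ ≤ M * C := mul_le_mul_of_nonneg_left (hC ⟨(A, fun i => c i / M), hcM⟩) hM.le
      _ = C * M := mul_comm _ _

theorem WeakCauchySeq.exists_tendsto_bidual {x : ℕ → X} (hx : WeakCauchySeq x) :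
    ∃ Λ : StrongDual ℝ (StrongDual ℝ X),
      ∀ f : StrongDual ℝ X, Tendsto (fun n => f (x n)) atTop (𝓝 (Λ f)) := by
  choose l hl using hx
  exact ⟨continuousLinearMapOfTendsto (fun n => inclusionInDoubleDual ℝ X (x n))
    (tendsto_pi_nhds.2 hl), hl⟩

theorem exists_pos_lt_norm_sub_inclusionInDoubleDual [CompleteSpace X]
    {Λ : StrongDual ℝ (StrongDual ℝ X)} (hΛ : Λ ∉ Set.range (inclusionInDoubleDual ℝ X)) :
    ∃ θ > 0, ∀ v : X, θ < ‖Λ - inclusionInDoubleDual ℝ X v‖ := by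
  have hclosed : IsClosed (Set.range (inclusionInDoubleDual ℝ X)) :=
    (inclusionInDoubleDualLi ℝ (E := X)).isometry.isUniformInducing.isComplete_range.isClosed
  have hpos : 0 < Metric.infDist Λ (Set.range (inclusionInDoubleDual ℝ X)) :=
    (Metric.infDist_pos_iff_notMem_closure (Set.range_nonempty _)).1 (by rwa [hclosed.closure_eq])
  refine ⟨_, half_pos hpos, fun v => ?_⟩
  exact (half_lt_self hpos).trans_le
    ((Metric.infDist_le_dist_of_mem (Set.mem_range_self v)).trans_eq (dist_eq_norm Λ _))

theorem exists_norm_le_one_forall_apply_eq_zero_lt_apply {ι : Type*} [Finite ι]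
    {Λ : StrongDual ℝ (StrongDual ℝ X)} {r : ℝ}
    (hr : ∀ v : X, r < ‖Λ - inclusionInDoubleDual ℝ X v‖) (w : ι → X) :
    ∃ f : StrongDual ℝ X, ‖f‖ ≤ 1 ∧ (∀ i, f (w i) = 0) ∧ r < Λ f := by
  -- Otherwise a norm-preserving extension `Λ'` of `Λ` from the annihilator `p` of the `w i` has
  -- `‖Λ'‖ ≤ r`, and `Λ - Λ'` vanishes on `p`, so it is the image of a combination `v` of the `w i`;
  -- then `‖Λ - inclusionInDoubleDual ℝ X v‖ = ‖Λ'‖ ≤ r`.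
  have := Fintype.ofFinite ι
  by_contra! hcon
  set L : ι → StrongDual ℝ X →ₗ[ℝ] ℝ :=
    fun i => (inclusionInDoubleDual ℝ X (w i) : StrongDual ℝ X →L[ℝ] ℝ)
  set p := ⨅ i, LinearMap.ker (L i)
  have hp : ∀ {g}, g ∈ p → ∀ i, g (w i) = 0 := fun hg i => by
    simpa [L] using (Submodule.mem_iInf _).1 hg i
  have hr0 : 0 ≤ r := by simpa using hcon 0 (by simp) (by simp)
  obtain ⟨Λ', hΛ'p, hΛ'⟩ := exists_extension_norm_eq p (Λ.comp p.subtypeL)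
  have hΛ'r : ‖Λ'‖ ≤ r := by
    refine hΛ' ▸ ContinuousLinearMap.opNorm_le_of_unit_norm hr0 fun g hg => ?_
    have h₁ := hcon g hg.le (hp g.2)
    have h₂ := hcon (-g) (by simpa using hg.le) (by simpa using hp g.2)
    simp only [ContinuousLinearMap.comp_apply, Submodule.subtypeL_apply, Real.norm_eq_abs]
    rw [map_neg] at h₂
    exact abs_le.2 ⟨by linarith, h₁⟩
  have hker : p ≤ LinearMap.ker ((Λ - Λ' : StrongDual ℝ X →L[ℝ] ℝ) : StrongDual ℝ X →ₗ[ℝ] ℝ) :=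
    fun g hg => by simpa [sub_eq_zero] using (hΛ'p ⟨g, hg⟩).symm
  obtain ⟨c, hc⟩ := (Submodule.mem_span_range_iff_exists_fun ℝ).1 (mem_span_of_iInf_ker_le_ker hker)
  have hv : inclusionInDoubleDual ℝ X (∑ i, c i • w i) = Λ - Λ' := by
    ext g
    simpa [L] using LinearMap.congr_fun hc g
  have := hr (∑ i, c i • w i)
  rw [hv, sub_sub_cancel Λ Λ'] at this
  linarith

theorem exists_convexComb_norm_le_of_weakLim_zero {z : ℕ → X} (hz : WeakLim z 0) (N : ℕ)
    {ε : ℝ} (hε : 0 < ε) :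
    ∃ (F : Finset ℕ) (lam : ℕ → ℝ), (∀ i ∈ F, N ≤ i) ∧ (∀ i, 0 ≤ lam i) ∧
      ∑ i ∈ F, lam i = 1 ∧ ‖∑ i ∈ F, lam i • z i‖ ≤ ε := by
  classical
  have h0 : (0 : X) ∈ closure (convexHull ℝ (z '' Set.Ici N)) := by
    by_contra h0
    obtain ⟨f, u, hfu, hu⟩ :=
      geometric_hahn_banach_point_closed (convex_convexHull ℝ _).closure isClosed_closure h0
    obtain ⟨n, hnu, hnN⟩ := ((hz f).eventually_lt_const hfu).and (eventually_ge_atTop N) |>.exists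
    exact (hu _ (subset_closure (subset_convexHull ℝ _ ⟨n, hnN, rfl⟩))).not_gt hnu
  obtain ⟨b, hb, hbε⟩ := Metric.mem_closure_iff.1 h0 ε hε
  obtain ⟨ι, _, w, zb, hw0, hw1, hzb, rfl⟩ := mem_convexHull_iff_exists_fintype.1 hb
  choose n hnN hzn using hzb
  -- push the weights forward along `n : ι → ℕ`
  refine ⟨univ.image n, fun p => ∑ i with n i = p, w i, by simpa using hnN,
    fun p => sum_nonneg fun i _ => hw0 i, ?_, ?_⟩
  · rwa [sum_fiberwise_of_maps_to fun i _ => mem_image_of_mem n (mem_univ i)]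
  · rw [dist_zero_left] at hbε
    refine le_of_eq_of_le ?_ hbε.le
    rw [← sum_fiberwise_of_maps_to fun i _ => mem_image_of_mem n (mem_univ i)]
    refine congrArg norm (sum_congr rfl fun p _ => ?_)
    rw [sum_smul]
    refine sum_congr rfl fun i hi => ?_
    rw [← hzn i, (mem_filter.1 hi).2]

theorem exists_tail_convexComb_approx {x z : ℕ → X} {Λ : StrongDual ℝ (StrongDual ℝ X)}
    (hΛ : ∀ g : StrongDual ℝ X, Tendsto (fun n => g (x n)) atTop (𝓝 (Λ g)))
    (hz : WeakLim z 0) (G : Finset (StrongDual ℝ X)) (N : ℕ) {ε : ℝ} (hε : 0 < ε) :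
    ∃ (F : Finset ℕ) (lam : ℕ → ℝ), (∀ i ∈ F, N ≤ i) ∧ (∀ i, 0 ≤ lam i) ∧
      ∑ i ∈ F, lam i = 1 ∧ ‖∑ i ∈ F, lam i • z i‖ ≤ ε ∧
      ∀ g ∈ G, |g (∑ i ∈ F, lam i • x i) - Λ g| ≤ ε := by
  obtain ⟨N₀, hN₀⟩ := eventually_atTop.1 <| (Finset.eventually_all G).2 fun g _ =>
    (hΛ g).eventually (Metric.closedBall_mem_nhds _ hε)
  obtain ⟨F, lam, hFN, hlam, hsum, hzF⟩ :=
    exists_convexComb_norm_le_of_weakLim_zero hz (max N N₀) hε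
  refine ⟨F, lam, fun i hi => (le_max_left _ _).trans (hFN i hi), hlam, hsum, hzF,
    fun g hg => ?_⟩
  have hmem : g (∑ i ∈ F, lam i • x i) ∈ Metric.closedBall (Λ g) ε := by
    simp only [map_sum, map_smul]
    exact (convex_closedBall _ _).sum_mem (fun i _ => hlam i) hsum
      fun i hi => hN₀ i ((le_max_right _ _).trans (hFN i hi)) g hg
  rwa [Metric.mem_closedBall, Real.dist_eq] at hmem

/-- The norm of `∑ j ≤ m, a j • s j` in `c₀`, where `s` is the summing basis. -/
def summingBasisNorm (m : ℕ) (a : ℕ → ℝ) : ℝ :=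
  (range (m + 1)).sup' nonempty_range_add_one fun k => |∑ i ∈ Icc k m, a i|

theorem abs_sum_Icc_le_summingBasisNorm {k m : ℕ} (hk : k ≤ m) (a : ℕ → ℝ) :
    |∑ i ∈ Icc k m, a i| ≤ summingBasisNorm m a :=
  le_sup' (fun k => |∑ i ∈ Icc k m, a i|) (mem_range_succ_iff.2 hk)

theorem summingBasisNorm_nonneg (m : ℕ) (a : ℕ → ℝ) : 0 ≤ summingBasisNorm m a :=
  (abs_nonneg _).trans (abs_sum_Icc_le_summingBasisNorm m.zero_le a)

theorem abs_le_two_mul_summingBasisNorm {j m : ℕ} (hj : j ≤ m) (a : ℕ → ℝ) :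
    |a j| ≤ 2 * summingBasisNorm m a := by
  have hsplit : a j = ∑ i ∈ Icc j m, a i - ∑ i ∈ Icc (j + 1) m, a i := by
    rw [Icc_eq_cons_Ioc hj, sum_cons, ← Icc_add_one_left_eq_Ioc, add_sub_cancel_right]
  have htail : |∑ i ∈ Icc (j + 1) m, a i| ≤ summingBasisNorm m a := by
    rcases hj.lt_or_eq with hjm | rfl
    · exact abs_sum_Icc_le_summingBasisNorm hjm a
    · simpa using summingBasisNorm_nonneg j a
  rw [hsplit]
  linarith [abs_sub (∑ i ∈ Icc j m, a i) (∑ i ∈ Icc (j + 1) m, a i),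
    abs_sum_Icc_le_summingBasisNorm hj a]

theorem abs_sum_mul_le_summingBasisNorm {m : ℕ} (a : ℕ → ℝ) {μ : ℕ → ℝ} (hμ : Monotone μ)
    (hμ₀ : 0 ≤ μ 0) (hμm : μ m ≤ 1) :
    |∑ j ∈ range (m + 1), a j * μ j| ≤ summingBasisNorm m a := by
  -- Abel summation: write `μ j = ∑ k ≤ j, d k` with increments `d k ≥ 0`
  set d : ℕ → ℝ := fun k => if k = 0 then μ 0 else μ k - μ (k - 1)
  have hd : ∀ k, 0 ≤ d k := by
    rintro (_ | k)
    · exact hμ₀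
    · simpa [d] using hμ k.le_succ
  have hμd : ∀ j, μ j = ∑ k ∈ range (j + 1), d k := by
    intro j
    induction j with
    | zero => simp [d]
    | succ j ih => rw [sum_range_succ, ← ih]; simp [d]
  have habel : ∑ j ∈ range (m + 1), a j * μ j =
      ∑ k ∈ range (m + 1), d k * ∑ j ∈ Icc k m, a j := by
    simp_rw [hμd, mul_sum, mul_comm (a _)]
    refine sum_comm' fun j k => ?_
    simp only [mem_range, mem_Icc]
    omega
  calc |∑ j ∈ range (m + 1), a j * μ j|
      ≤ ∑ k ∈ range (m + 1), d k * summingBasisNorm m a := by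
        rw [habel]
        refine (abs_sum_le_sum_abs _ _).trans (sum_le_sum fun k hk => ?_)
        rw [abs_mul, abs_of_nonneg (hd k)]
        exact mul_le_mul_of_nonneg_left
          (abs_sum_Icc_le_summingBasisNorm (mem_range_succ_iff.1 hk) a) (hd k)
    _ = μ m * summingBasisNorm m a := by rw [← sum_mul, ← hμd]
    _ ≤ summingBasisNorm m a := mul_le_of_le_one_left (summingBasisNorm_nonneg m a) hμm

theorem equivSummingBasis_of_bounds {w : ℕ → X} {c C : ℝ} (hc : 0 < c)
    (hlower : ∀ m a, c * summingBasisNorm m a ≤ ‖∑ j ∈ range (m + 1), a j • w j‖)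
    (hupper : ∀ m a, ‖∑ j ∈ range (m + 1), a j • w j‖ ≤ C * summingBasisNorm m a) :
    EquivSummingBasis w := by
  refine ⟨max (max c⁻¹ C) 1, le_max_right _ _, fun m a => ⟨fun k hk => ?_, ?_⟩⟩
  · have hL : 1 / max (max c⁻¹ C) 1 ≤ c := by
      rw [one_div_le (by positivity) hc, one_div]
      exact (le_max_left _ _).trans (le_max_left _ _)
    exact (mul_le_mul hL (abs_sum_Icc_le_summingBasisNorm hk a) (abs_nonneg _) hc.le).trans
      (hlower m a)
  · exact (hupper m a).trans (mul_le_mul_of_nonneg_right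
      ((le_max_right _ _).trans (le_max_left _ _)) (summingBasisNorm_nonneg m a))

theorem summingBasisNorm_le_norm_sum_smul {w : ℕ → X} {f : ℕ → StrongDual ℝ X}
    {c ε : ℕ → ℝ} {θ : ℝ} (hf : ∀ k, ‖f k‖ ≤ 1) (hc : ∀ k, θ ≤ c k)
    (hzero : ∀ j k, j < k → f k (w j) = 0)
    (happrox : ∀ j k, k ≤ j → |f k (w j) - c k| ≤ ε j)
    (hε : ∀ n, ∑ j ∈ range n, ε j ≤ θ / 4) (m : ℕ) (a : ℕ → ℝ) :
    θ / 2 * summingBasisNorm m a ≤ ‖∑ j ∈ range (m + 1), a j • w j‖ := by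
  set M := summingBasisNorm m a
  obtain ⟨k, hk, hkM⟩ := exists_mem_eq_sup' nonempty_range_add_one
    fun k => |∑ i ∈ Icc k m, a i|
  have hkm : k ≤ m := mem_range_succ_iff.1 hk
  have hM : 0 ≤ M := summingBasisNorm_nonneg m a
  have hε₀ : ∀ j, 0 ≤ ε j := fun j => (abs_nonneg _).trans (happrox j 0 j.zero_le)
  have hfk : f k (∑ j ∈ range (m + 1), a j • w j) =
      (∑ j ∈ Icc k m, a j) * c k + ∑ j ∈ Icc k m, a j * (f k (w j) - c k) := by
    rw [map_sum, sum_mul, ← sum_add_distrib, ← sum_range_add_sum_Ico _ (by omega : k ≤ m + 1),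
      sum_eq_zero fun j hj => by rw [map_smul, hzero j k (mem_range.1 hj), smul_zero],
      zero_add, Ico_add_one_right_eq_Icc]
    exact sum_congr rfl fun j _ => by rw [map_smul, smul_eq_mul]; ring
  have herr : |∑ j ∈ Icc k m, a j * (f k (w j) - c k)| ≤ 2 * M * (θ / 4) := by
    refine (abs_sum_le_sum_abs _ _).trans ?_
    calc ∑ j ∈ Icc k m, |a j * (f k (w j) - c k)| ≤ ∑ j ∈ Icc k m, 2 * M * ε j := by
          refine sum_le_sum fun j hj => ?_
          obtain ⟨hkj, hjm⟩ := mem_Icc.1 hj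
          rw [abs_mul]
          exact mul_le_mul (abs_le_two_mul_summingBasisNorm hjm a) (happrox j k hkj)
            (abs_nonneg _) (by linarith)
      _ ≤ 2 * M * ∑ j ∈ range (m + 1), ε j := by
          rw [← mul_sum]
          refine mul_le_mul_of_nonneg_left (sum_le_sum_of_subset_of_nonneg
            (fun j hj => mem_range_succ_iff.2 (mem_Icc.1 hj).2) fun j _ _ => hε₀ j) (by linarith)
      _ ≤ 2 * M * (θ / 4) := mul_le_mul_of_nonneg_left (hε _) (by linarith)
  have hmain : M * θ ≤ |(∑ j ∈ Icc k m, a j) * c k| := by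
    rw [abs_mul, ← hkM]
    exact mul_le_mul_of_nonneg_left ((hc k).trans (le_abs_self _)) hM
  have hnorm : |f k (∑ j ∈ range (m + 1), a j • w j)| ≤ ‖∑ j ∈ range (m + 1), a j • w j‖ := by
    simpa using (f k).le_of_opNorm_le (hf k) (∑ j ∈ range (m + 1), a j • w j)
  rw [hfk] at hnorm
  linarith [abs_sub_abs_le_abs_add ((∑ j ∈ Icc k m, a j) * c k)
    (∑ j ∈ Icc k m, a j * (f k (w j) - c k))]

theorem norm_sum_smul_sub_sum_smul_le {w v : ℕ → X} {ε : ℕ → ℝ}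
    (h : ∀ j, ‖w j - v j‖ ≤ ε j) (m : ℕ) (a : ℕ → ℝ) :
    ‖∑ j ∈ range (m + 1), a j • w j - ∑ j ∈ range (m + 1), a j • v j‖ ≤
      2 * summingBasisNorm m a * ∑ j ∈ range (m + 1), ε j := by
  rw [← sum_sub_distrib, mul_sum]
  refine (norm_sum_le _ _).trans (sum_le_sum fun j hj => ?_)
  rw [← smul_sub, norm_smul, Real.norm_eq_abs]
  exact mul_le_mul (abs_le_two_mul_summingBasisNorm (mem_range_succ_iff.1 hj) a) (h j)
    (norm_nonneg _) (by linarith [summingBasisNorm_nonneg m a])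

theorem isConvexBlockSeq_of_pairwise_lt {x : ℕ → X} {F : ℕ → Finset ℕ} {lam : ℕ → ℕ → ℝ}
    (hlam : ∀ j i, 0 ≤ lam j i) (hsum : ∀ j, ∑ i ∈ F j, lam j i = 1)
    (hF : ∀ j j', j < j' → ∀ i ∈ F j, ∀ i' ∈ F j', i < i') :
    IsConvexBlockSeq (fun j => ∑ i ∈ F j, lam j i • x i) x := by
  classical
  have huniq : ∀ {i j j'}, i ∈ F j → i ∈ F j' → j = j' := fun hj hj' => by
    by_contra hne
    rcases Nat.lt_or_gt_of_ne hne with h | h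
    · exact lt_irrefl _ (hF _ _ h _ hj _ hj')
    · exact lt_irrefl _ (hF _ _ h _ hj' _ hj)
  -- the blocks are disjoint, so a single weight function on `ℕ` serves all of them
  let weight : ℕ → ℝ := fun i => if h : ∃ j, i ∈ F j then lam h.choose i else 0
  have hweight : ∀ j, ∀ i ∈ F j, weight i = lam j i := fun j i hi => by
    have h : ∃ j, i ∈ F j := ⟨j, hi⟩
    simp only [weight, dif_pos h, huniq h.choose_spec hi]
  refine ⟨F, weight, fun j => nonempty_of_sum_ne_zero (by rw [hsum j]; exact one_ne_zero),
    fun j => hF j (j + 1) j.lt_succ_self, fun i => ?_,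
    fun j => (sum_congr rfl (hweight j)).trans (hsum j),
    fun j => sum_congr rfl fun i hi => by rw [hweight j i hi]⟩
  simp only [weight]
  split_ifs
  exacts [hlam _ _, le_rfl]

def tailMass (F : Finset ℕ) (lam : ℕ → ℝ) (p : ℕ) : ℝ :=
  ∑ i ∈ F with p ≤ i, lam i

theorem sum_smul_partialSum_eq_sum_tailMass_smul {F : Finset ℕ} {P : ℕ} (hF : F ⊆ range P)
    (lam : ℕ → ℝ) (y : ℕ → X) :
    ∑ i ∈ F, lam i • ∑ p ∈ range (i + 1), y p = ∑ p ∈ range P, tailMass F lam p • y p := by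
  simp_rw [smul_sum, tailMass, sum_smul]
  refine sum_comm' fun i p => ?_
  have hiP : i ∈ F → i < P := fun hi => mem_range.1 (hF hi)
  simp only [mem_range, mem_filter]
  constructor
  · rintro ⟨hi, hpi⟩
    exact ⟨⟨hi, by omega⟩, (Nat.lt_succ_iff.1 hpi).trans_lt (hiP hi)⟩
  · rintro ⟨⟨hi, hpi⟩, -⟩
    exact ⟨hi, by omega⟩

theorem tailMass_nonneg {F : Finset ℕ} {lam : ℕ → ℝ} (hlam : ∀ i, 0 ≤ lam i) (p : ℕ) :
    0 ≤ tailMass F lam p :=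
  sum_nonneg fun i _ => hlam i

theorem tailMass_le_one {F : Finset ℕ} {lam : ℕ → ℝ} (hlam : ∀ i, 0 ≤ lam i)
    (hsum : ∑ i ∈ F, lam i = 1) (p : ℕ) : tailMass F lam p ≤ 1 :=
  hsum ▸ sum_le_sum_of_subset_of_nonneg (filter_subset _ _) fun i _ _ => hlam i

theorem tailMass_le_tailMass_of_lt {F F' : Finset ℕ} {lam lam' : ℕ → ℝ}
    (hlam : ∀ i, 0 ≤ lam i) (hsum : ∑ i ∈ F, lam i = 1) (hlam' : ∀ i, 0 ≤ lam' i)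
    (hsum' : ∑ i ∈ F', lam' i = 1) (hFF' : ∀ i ∈ F, ∀ i' ∈ F', i < i') (p : ℕ) :
    tailMass F lam p ≤ tailMass F' lam' p := by
  by_cases h : ∃ i ∈ F, p ≤ i
  · obtain ⟨i, hi, hpi⟩ := h
    have hfull : tailMass F' lam' p = 1 := by
      rw [tailMass, filter_true_of_mem fun i' hi' => hpi.trans (hFF' i hi i' hi').le, hsum']
    exact hfull ▸ tailMass_le_one hlam hsum p
  · simp only [not_exists, not_and, not_le] at h
    have hempty : tailMass F lam p = 0 := sum_eq_zero fun i hi =>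
      absurd (mem_filter.1 hi).2 (h i (mem_filter.1 hi).1).not_ge
    exact hempty ▸ tailMass_nonneg hlam' p

theorem norm_sum_smul_convexBlock_partialSums_le {y : ℕ → X} {C : ℝ}
    (hC : ∀ (A : Finset ℕ) (c : ℕ → ℝ) (M : ℝ), (∀ p, |c p| ≤ M) →
      ‖∑ p ∈ A, c p • y p‖ ≤ C * M)
    {F : ℕ → Finset ℕ} {lam : ℕ → ℕ → ℝ} (hlam : ∀ j i, 0 ≤ lam j i)
    (hsum : ∀ j, ∑ i ∈ F j, lam j i = 1) (hF : ∀ j j', j < j' → ∀ i ∈ F j, ∀ i' ∈ F j', i < i')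
    (m : ℕ) (a : ℕ → ℝ) :
    ‖∑ j ∈ range (m + 1), a j • ∑ i ∈ F j, lam j i • ∑ p ∈ range (i + 1), y p‖ ≤
      C * summingBasisNorm m a := by
  obtain ⟨P, hP⟩ := exists_nat_subset_range ((range (m + 1)).biUnion F)
  have hFP : ∀ j ∈ range (m + 1), F j ⊆ range P := fun j hj =>
    (subset_biUnion_of_mem F hj).trans hP
  have hrewrite : ∑ j ∈ range (m + 1), a j • ∑ i ∈ F j, lam j i • ∑ p ∈ range (i + 1), y p =
      ∑ p ∈ range P, (∑ j ∈ range (m + 1), a j * tailMass (F j) (lam j) p) • y p := by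
    rw [sum_congr rfl fun j hj => by
      rw [sum_smul_partialSum_eq_sum_tailMass_smul (hFP j hj)]]
    simp_rw [smul_sum, smul_smul, sum_smul]
    exact sum_comm
  rw [hrewrite]
  refine hC _ _ _ fun p => abs_sum_mul_le_summingBasisNorm a ?_
    (tailMass_nonneg (hlam 0) p) (tailMass_le_one (hlam m) (hsum m) p)
  exact monotone_nat_of_le_succ fun j => tailMass_le_tailMass_of_lt (hlam j) (hsum j)
    (hlam (j + 1)) (hsum (j + 1)) (hF j (j + 1) j.lt_succ_self) p

theorem norm_sum_smul_convexBlock_le_of_close_partialSums {x y : ℕ → X} {C θ : ℝ}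
    (hC : ∀ (A : Finset ℕ) (c : ℕ → ℝ) (M : ℝ), (∀ p, |c p| ≤ M) →
      ‖∑ p ∈ A, c p • y p‖ ≤ C * M)
    {F : ℕ → Finset ℕ} {lam : ℕ → ℕ → ℝ} (hlam : ∀ j i, 0 ≤ lam j i)
    (hsum : ∀ j, ∑ i ∈ F j, lam j i = 1) (hF : ∀ j j', j < j' → ∀ i ∈ F j, ∀ i' ∈ F j', i < i')
    {ε : ℕ → ℝ} (hclose : ∀ j, ‖∑ i ∈ F j, lam j i • (x i - ∑ p ∈ range (i + 1), y p)‖ ≤ ε j)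
    (hε : ∀ n, ∑ j ∈ range n, ε j ≤ θ / 4) (m : ℕ) (a : ℕ → ℝ) :
    ‖∑ j ∈ range (m + 1), a j • ∑ i ∈ F j, lam j i • x i‖ ≤ (C + θ / 2) * summingBasisNorm m a := by
  have hclose' : ∀ j, ‖∑ i ∈ F j, lam j i • x i -
      ∑ i ∈ F j, lam j i • ∑ p ∈ range (i + 1), y p‖ ≤ ε j := fun j => by
    simpa only [← sum_sub_distrib, ← smul_sub] using hclose j
  calc _ ≤ _ := norm_le_insert' _ _
    _ ≤ C * summingBasisNorm m a + 2 * summingBasisNorm m a * (θ / 4) :=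
      add_le_add (norm_sum_smul_convexBlock_partialSums_le hC hlam hsum hF m a)
        ((norm_sum_smul_sub_sum_smul_le hclose' m a).trans
          (mul_le_mul_of_nonneg_left (hε _) (by linarith [summingBasisNorm_nonneg m a])))
    _ = (C + θ / 2) * summingBasisNorm m a := by ring

/-- A step of the recursion: a convex block `∑ i ∈ support, weight i • x i` and a functional.
`start` bounds `support` from below and also indexes the tolerance `ε start` of the step. -/
structure BlockStage (X : Type*) [NormedAddCommGroup X] [NormedSpace ℝ X] where
  start : ℕ
  support : Finset ℕ
  weight : ℕ → ℝ
  functional : StrongDual ℝ X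

namespace BlockStage

variable (x z : ℕ → X) (Λ : StrongDual ℝ (StrongDual ℝ X)) (θ : ℝ) (ε : ℕ → ℝ)

def comb (b : BlockStage X) (u : ℕ → X) : X :=
  ∑ i ∈ b.support, b.weight i • u i

structure IsAdmissible (b : BlockStage X) : Prop where
  start_le : ∀ i ∈ b.support, b.start ≤ i
  weight_nonneg : ∀ i, 0 ≤ b.weight i
  sum_weight : ∑ i ∈ b.support, b.weight i = 1
  norm_functional_le : ‖b.functional‖ ≤ 1
  lt_apply_functional : θ < Λ b.functional
  norm_comb_le : ‖b.comb z‖ ≤ ε b.start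
  abs_functional_comb_sub_le : |b.functional (b.comb x) - Λ b.functional| ≤ ε b.start

structure Precedes (a b : BlockStage X) : Prop where
  lt_start : ∀ i ∈ a.support, i < b.start
  functional_comb_eq_zero : b.functional (a.comb x) = 0
  abs_functional_comb_sub_le : |a.functional (b.comb x) - Λ a.functional| ≤ ε b.start

variable {x z Λ θ ε}

theorem exists_isAdmissible_forall_precedes
    (hΛ : ∀ g : StrongDual ℝ X, Tendsto (fun n => g (x n)) atTop (𝓝 (Λ g)))
    (hz : WeakLim z 0) (hθ : ∀ v : X, θ < ‖Λ - inclusionInDoubleDual ℝ X v‖)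
    (hε : ∀ n, 0 < ε n) (S : Finset (BlockStage X)) :
    ∃ b : BlockStage X, b.IsAdmissible x z Λ θ ε ∧ ∀ a ∈ S, a.Precedes x Λ ε b := by
  classical
  obtain ⟨f, hf, hfS, hθf⟩ :=
    exists_norm_le_one_forall_apply_eq_zero_lt_apply hθ fun a : S => a.1.comb x
  set N := S.sup fun a => a.support.sup id + 1
  have hN : ∀ a ∈ S, ∀ i ∈ a.support, i < N := fun a ha i hi =>
    Nat.lt_succ_of_le (le_sup (f := id) hi) |>.trans_le
      (le_sup (f := fun a : BlockStage X => a.support.sup id + 1) ha)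
  obtain ⟨F, lam, hFN, hlam, hsum, hzF, happrox⟩ :=
    exists_tail_convexComb_approx hΛ hz (insert f (S.image functional)) N (hε N)
  exact ⟨⟨N, F, lam, f⟩, ⟨hFN, hlam, hsum, hf, hθf, hzF, happrox f (mem_insert_self _ _)⟩,
    fun a ha => ⟨hN a ha, hfS ⟨a, ha⟩, happrox _ (mem_insert_of_mem (mem_image_of_mem _ ha))⟩⟩

end BlockStage

open BlockStage in
theorem exists_interlaced_convexBlocks {x z : ℕ → X} {Λ : StrongDual ℝ (StrongDual ℝ X)}
    {θ : ℝ} {ε : ℕ → ℝ}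
    (hΛ : ∀ g : StrongDual ℝ X, Tendsto (fun n => g (x n)) atTop (𝓝 (Λ g)))
    (hz : WeakLim z 0) (hθ : ∀ v : X, θ < ‖Λ - inclusionInDoubleDual ℝ X v‖)
    (hε : ∀ n, 0 < ε n) (hε_anti : Antitone ε) :
    ∃ (F : ℕ → Finset ℕ) (lam : ℕ → ℕ → ℝ) (f : ℕ → StrongDual ℝ X),
      (∀ j i, 0 ≤ lam j i) ∧ (∀ j, ∑ i ∈ F j, lam j i = 1) ∧
      (∀ j j', j < j' → ∀ i ∈ F j, ∀ i' ∈ F j', i < i') ∧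
      (∀ j, ‖f j‖ ≤ 1) ∧ (∀ j, θ < Λ (f j)) ∧
      (∀ j, ‖∑ i ∈ F j, lam j i • z i‖ ≤ ε j) ∧
      (∀ j k, j < k → f k (∑ i ∈ F j, lam j i • x i) = 0) ∧
      (∀ j k, k ≤ j → |f k (∑ i ∈ F j, lam j i • x i) - Λ (f k)| ≤ ε j) := by
  obtain ⟨b, hb, hbb⟩ := exists_seq_of_forall_finset_exists (IsAdmissible x z Λ θ ε)
    (Precedes x Λ ε) fun S _ => exists_isAdmissible_forall_precedes hΛ hz hθ hε S
  have hstart : StrictMono fun j => (b j).start := strictMono_nat_of_lt_succ fun j => by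
    obtain ⟨i, hi⟩ := nonempty_of_sum_ne_zero ((hb j).sum_weight ▸ one_ne_zero)
    exact ((hb j).start_le i hi).trans_lt ((hbb j (j + 1) j.lt_succ_self).lt_start i hi)
  have htol : ∀ j, ε (b j).start ≤ ε j := fun j => hε_anti (hstart.id_le j)
  refine ⟨fun j => (b j).support, fun j => (b j).weight, fun j => (b j).functional,
    fun j => (hb j).weight_nonneg, fun j => (hb j).sum_weight,
    fun j j' h i hi i' hi' => ((hbb j j' h).lt_start i hi).trans_le ((hb j').start_le i' hi'),
    fun j => (hb j).norm_functional_le, fun j => (hb j).lt_apply_functional,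
    fun j => ((hb j).norm_comb_le).trans (htol j),
    fun j k h => (hbb j k h).functional_comb_eq_zero, fun j k hkj => ?_⟩
  rcases hkj.lt_or_eq with h | rfl
  · exact (hbb k j h).abs_functional_comb_sub_le.trans (htol j)
  · exact (hb k).abs_functional_comb_sub_le.trans (htol k)

end

/-- in a Banach space with Pełczyński's property (u), every non-trivial
weak Cauchy sequence has a convex block sequence equivalent to the summing basis
of `c₀`. -/
theorem exists_convexBlock_equivSummingBasis_of_propertyU
    {X : Type*} [NormedAddCommGroup X] [NormedSpace ℝ X] [CompleteSpace X]
    (hu : PropertyU X) (x : ℕ → X)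
    (hwc : WeakCauchySeq x) (hnwconv : ¬ ∃ z, WeakLim x z) :
    ∃ w : ℕ → X, IsConvexBlockSeq w x ∧ EquivSummingBasis w := by
  obtain ⟨y, hy, hxy⟩ := hu x hwc
  obtain ⟨Λ, hΛ⟩ := hwc.exists_tendsto_bidual
  obtain ⟨θ, hθ, hθΛ⟩ := exists_pos_lt_norm_sub_inclusionInDoubleDual (Λ := Λ) <| by
    rintro ⟨v, rfl⟩
    exact hnwconv ⟨v, hΛ⟩
  obtain ⟨C, hC⟩ := exists_norm_sum_smul_le_of_summable_abs hy
  set ε : ℕ → ℝ := fun j => θ / 8 * (1 / 2) ^ j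
  have hε : ∀ n, ∑ j ∈ Finset.range n, ε j ≤ θ / 4 := fun n => by
    rw [← Finset.mul_sum]
    linarith [mul_le_mul_of_nonneg_left (sum_geometric_two_le n) (by positivity : 0 ≤ θ / 8)]
  obtain ⟨F, lam, f, hlam, hsum, hF, hf, hθf, hclose, hzero, happrox⟩ :=
    exists_interlaced_convexBlocks hΛ hxy hθΛ (ε := ε) (fun n => by positivity)
      fun m n hmn => mul_le_mul_of_nonneg_left (pow_le_pow_of_le_one (by norm_num) (by norm_num)
        hmn) (by positivity)
  exact ⟨_, isConvexBlockSeq_of_pairwise_lt hlam hsum hF, equivSummingBasis_of_bounds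
    (half_pos hθ) (summingBasisNorm_le_norm_sum_smul hf (fun k => (hθf k).le) hzero happrox hε)
    (norm_sum_smul_convexBlock_le_of_close_partialSums hC hlam hsum hF hclose hε)⟩

end
end

section
/- Let (y_n) be a sequence in a real Banach space X and let c₂ > 0 be a constant such that ‖∑_{i=1}^m t_i y_i‖ ≤ c₂ max_{1≤i≤m} |t_i| for all m and all scalars t_1, …, t_m. Set z_n = ∑_{i=1}^n y_i, and let (Z_j) be any convex block sequence of (z_n). Then ‖∑_{j=1}^m a_j Z_j‖ ≤ c₂ max_{1≤k≤m} |∑_{j=k}^m a_j| for all m and all scalars a_1, …, a_m; that is, (Z_j) is dominated by the summing basis of c₀. -/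
/-!
Write `Z j = ∑ᵢ μ j i • y i` with `μ j i = ∑_{n ∈ F j, i ≤ n} λ n`. The weights `μ j i` lie in
`[0, 1]` and increase with `j` because the blocks are successive, so by Abel summation the
coefficient of `y i` in `∑ⱼ a j • Z j` is a combination of the tail sums `∑_{j=k}^m a j` with
nonnegative weights of total at most `1`. The bound on `∑ᵢ tᵢ yᵢ` then gives the estimate.
-/

open Filter Topology

noncomputable section

variable {E : Type*} [NormedAddCommGroup E] [NormedSpace ℝ E]

open Finset

/-- The norm of `∑_{j ≤ m} a j • s j` in `c₀`, where `s j = e 0 + ⋯ + e j` is the summing basis. -/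
def summingNorm (m : ℕ) (a : ℕ → ℝ) : ℝ :=
  (range (m + 1)).sup' nonempty_range_add_one fun k => |∑ j ∈ Icc k m, a j|

lemma abs_sum_Icc_le_summingNorm {k m : ℕ} (hk : k ≤ m) (a : ℕ → ℝ) :
    |∑ j ∈ Icc k m, a j| ≤ summingNorm m a :=
  le_sup' (fun k => |∑ j ∈ Icc k m, a j|) (mem_range_succ_iff.2 hk)

lemma summingNorm_nonneg (m : ℕ) (a : ℕ → ℝ) : 0 ≤ summingNorm m a :=
  (abs_nonneg _).trans (abs_sum_Icc_le_summingNorm le_rfl a)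

lemma sum_mul_eq_mul_sum_add_sum_sub_mul_sum_Icc (a μ : ℕ → ℝ) (m : ℕ) :
    ∑ j ∈ range (m + 1), a j * μ j =
      μ 0 * ∑ j ∈ Icc 0 m, a j + ∑ k ∈ range m, (μ (k + 1) - μ k) * ∑ j ∈ Icc (k + 1) m, a j := by
  have hμ : ∀ j, μ j = μ 0 + ∑ k ∈ range j, (μ (k + 1) - μ k) := fun j => by
    rw [sum_range_sub, add_sub_cancel]
  calc ∑ j ∈ range (m + 1), a j * μ j
      = μ 0 * ∑ j ∈ Icc 0 m, a j +
          ∑ j ∈ Ico 0 (m + 1), ∑ k ∈ Ico 0 j, (μ (k + 1) - μ k) * a j := by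
        simp only [← Ico_add_one_right_eq_Icc, ← range_eq_Ico, mul_sum, ← sum_add_distrib, ← sum_mul]
        exact sum_congr rfl fun j _ => by rw [hμ j]; ring
    _ = _ := by
        rw [← sum_Ico_Ico_comm', ← range_eq_Ico, sum_range_succ, Ico_self, sum_empty, add_zero]
        simp only [mul_sum, Ico_add_one_right_eq_Icc]

lemma abs_sum_mul_le_summingNorm {a μ : ℕ → ℝ} {m : ℕ} (hμ : Monotone μ) (h0 : 0 ≤ μ 0)
    (h1 : μ m ≤ 1) : |∑ j ∈ range (m + 1), a j * μ j| ≤ summingNorm m a := by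
  set M := summingNorm m a
  rw [sum_mul_eq_mul_sum_add_sum_sub_mul_sum_Icc]
  calc _ ≤ μ 0 * M + ∑ k ∈ range m, (μ (k + 1) - μ k) * M := by
        refine (abs_add_le _ _).trans (add_le_add ?_ ?_)
        · rw [abs_mul, abs_of_nonneg h0]
          exact mul_le_mul_of_nonneg_left (abs_sum_Icc_le_summingNorm m.zero_le a) h0
        · refine (abs_sum_le_sum_abs _ _).trans (sum_le_sum fun k hk => ?_)
          have hd : 0 ≤ μ (k + 1) - μ k := sub_nonneg.2 (hμ k.le_succ)
          rw [abs_mul, abs_of_nonneg hd]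
          exact mul_le_mul_of_nonneg_left (abs_sum_Icc_le_summingNorm (mem_range.1 hk) a) hd
    _ = μ m * M := by rw [← sum_mul, sum_range_sub]; ring
    _ ≤ M := mul_le_of_le_one_left (summingNorm_nonneg m a) h1

lemma norm_sum_smul_sum_smul_le_summingNorm {X : Type*} [NormedAddCommGroup X] [NormedSpace ℝ X]
    {y : ℕ → X} {c : ℝ} {N : ℕ} (hc : 0 ≤ c)
    (hy : ∀ t : ℕ → ℝ, ‖∑ i ∈ range (N + 1), t i • y i‖ ≤
      c * (range (N + 1)).sup' nonempty_range_add_one fun i => |t i|)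
    {μ : ℕ → ℕ → ℝ} {m : ℕ} (hμ : ∀ i, Monotone (μ · i)) (h0 : ∀ i, 0 ≤ μ 0 i)
    (h1 : ∀ i, μ m i ≤ 1) (a : ℕ → ℝ) :
    ‖∑ j ∈ range (m + 1), a j • ∑ i ∈ range (N + 1), μ j i • y i‖ ≤ c * summingNorm m a := by
  have hswap : ∑ j ∈ range (m + 1), a j • ∑ i ∈ range (N + 1), μ j i • y i =
      ∑ i ∈ range (N + 1), (∑ j ∈ range (m + 1), a j * μ j i) • y i := by
    simp only [smul_sum, sum_smul, smul_smul]
    exact sum_comm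
  rw [hswap]
  exact (hy _).trans <| mul_le_mul_of_nonneg_left
    (sup'_le _ _ fun i _ => abs_sum_mul_le_summingNorm (hμ i) (h0 i) (h1 i)) hc

/-- The coefficient of `y i` in `∑_{n ∈ F} lam n • ∑_{i' ≤ n} y i'`. -/
def tailWeight (F : Finset ℕ) (lam : ℕ → ℝ) (i : ℕ) : ℝ :=
  ∑ n ∈ F with i ≤ n, lam n

section tailWeight

variable {F G : Finset ℕ} {lam : ℕ → ℝ}

lemma tailWeight_nonneg (hlam : ∀ n, 0 ≤ lam n) (i : ℕ) : 0 ≤ tailWeight F lam i :=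
  sum_nonneg fun n _ => hlam n

lemma tailWeight_le_sum (hlam : ∀ n, 0 ≤ lam n) (i : ℕ) : tailWeight F lam i ≤ ∑ n ∈ F, lam n :=
  sum_le_sum_of_subset_of_nonneg (filter_subset _ _) fun n _ _ => hlam n

lemma tailWeight_le_tailWeight (hFG : ∀ n ∈ F, ∀ n' ∈ G, n < n') (hlam : ∀ n, 0 ≤ lam n)
    (hsum : ∑ n ∈ F, lam n ≤ ∑ n ∈ G, lam n) (i : ℕ) :
    tailWeight F lam i ≤ tailWeight G lam i := by
  by_cases h : ∃ n ∈ F, i ≤ n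
  · obtain ⟨n, hn, hin⟩ := h
    have hG : tailWeight G lam i = ∑ n ∈ G, lam n :=
      sum_congr (filter_true_of_mem fun n' hn' => (hFG n hn n' hn').le.trans' hin) fun _ _ => rfl
    exact (tailWeight_le_sum hlam i).trans (hsum.trans hG.ge)
  · push Not at h
    have hF : tailWeight F lam i = 0 := by
      rw [tailWeight, filter_false_of_mem fun n hn => (h n hn).not_ge, sum_empty]
    exact hF.le.trans (tailWeight_nonneg hlam i)

end tailWeight

lemma sum_smul_sum_range_eq_sum_tailWeight_smul {V : Type*} [AddCommMonoid V] [Module ℝ V]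
    (y : ℕ → V) {F : Finset ℕ} {N : ℕ} (hF : ∀ n ∈ F, n ≤ N) (lam : ℕ → ℝ) :
    ∑ n ∈ F, lam n • ∑ i ∈ range (n + 1), y i =
      ∑ i ∈ range (N + 1), tailWeight F lam i • y i := by
  simp only [tailWeight, sum_filter, sum_smul, smul_sum]
  rw [sum_comm]
  refine sum_congr rfl fun n hn => ?_
  have hrange : range (n + 1) = {i ∈ range (N + 1) | i ≤ n} := by
    ext i
    simp only [mem_range, mem_filter]
    have := hF n hn
    omega
  simp only [ite_smul, zero_smul, ← sum_filter, hrange]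

theorem convexBlock_of_partialSums_dominated_by_summingBasis_general
    {X : Type*} [NormedAddCommGroup X] [NormedSpace ℝ X]
    (y : ℕ → X) (c₂ : ℝ) (hc₂ : 0 < c₂)
    (hwuc : ∀ m : ℕ, ∀ t : ℕ → ℝ,
      ‖∑ i ∈ Finset.range (m + 1), t i • y i‖ ≤
        c₂ * (Finset.range (m + 1)).sup' Finset.nonempty_range_add_one (fun i => |t i|))
    (z : ℕ → X) (hz : ∀ n, z n = ∑ i ∈ Finset.range (n + 1), y i)
    (Z : ℕ → X) (hZ : IsConvexBlockSeq Z z) :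
    ∀ m : ℕ, ∀ a : ℕ → ℝ,
      ‖∑ j ∈ Finset.range (m + 1), a j • Z j‖ ≤
        c₂ * (Finset.range (m + 1)).sup' Finset.nonempty_range_add_one
          (fun k => |∑ j ∈ Finset.Icc k m, a j|) := by
  obtain ⟨F, lam, -, hord, hlam0, hlam1, hZF⟩ := hZ
  intro m a
  set N := ((range (m + 1)).biUnion F).sup id
  have hZj : ∀ j ∈ range (m + 1),
      a j • Z j = a j • ∑ i ∈ range (N + 1), tailWeight (F j) lam i • y i := fun j hj => by
    rw [hZF j, ← sum_smul_sum_range_eq_sum_tailWeight_smul y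
      (fun n hn => le_sup (f := id) (mem_biUnion.2 ⟨j, hj, hn⟩))]
    simp only [hz]
  rw [sum_congr rfl hZj]
  refine norm_sum_smul_sum_smul_le_summingNorm hc₂.le (hwuc N)
    (fun i => monotone_nat_of_le_succ fun j => ?_) (fun i => tailWeight_nonneg hlam0 i)
    (fun i => (tailWeight_le_sum hlam0 i).trans (hlam1 m).le) a
  exact tailWeight_le_tailWeight (hord j) hlam0 (by rw [hlam1, hlam1]) i

/-- if the series `∑ yₙ` is WUC with constant `c₂` and
`zₙ = ∑_{i ≤ n} yᵢ`, then every convex block sequence of `z` is dominated by the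
summing basis of `c₀` with constant `c₂`. -/
theorem convexBlock_of_partialSums_dominated_by_summingBasis
    {X : Type*} [NormedAddCommGroup X] [NormedSpace ℝ X] [CompleteSpace X]
    (y : ℕ → X) (c₂ : ℝ) (hc₂ : 0 < c₂)
    (hwuc : ∀ m : ℕ, ∀ t : ℕ → ℝ,
      ‖∑ i ∈ Finset.range (m + 1), t i • y i‖ ≤
        c₂ * (Finset.range (m + 1)).sup' Finset.nonempty_range_add_one (fun i => |t i|))
    (z : ℕ → X) (hz : ∀ n, z n = ∑ i ∈ Finset.range (n + 1), y i)
    (Z : ℕ → X) (hZ : IsConvexBlockSeq Z z) :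
    ∀ m : ℕ, ∀ a : ℕ → ℝ,
      ‖∑ j ∈ Finset.range (m + 1), a j • Z j‖ ≤
        c₂ * (Finset.range (m + 1)).sup' Finset.nonempty_range_add_one
          (fun k => |∑ j ∈ Finset.Icc k m, a j|) :=
  convexBlock_of_partialSums_dominated_by_summingBasis_general y c₂ hc₂ hwuc z hz Z hZ

end
end

section
/- If a real Banach space X has property (su), then every closed linear subspace Y of X also has property (su). -/
open Filter Topology

noncomputable section

variable {E : Type*} [NormedAddCommGroup E] [NormedSpace ℝ E]

/-!
Regard the weak Cauchy sequence `x` of `Y` as a sequence in `X` and apply (su) there: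
`x - w → 0` weakly for some convex block shiftable `w`. As `x` does not converge weakly, `w` is
not weakly null, so a functional stays above some `c > 0` along a subsequence `y` of `w`; then
all convex block sequences of `y` are bounded below in norm. By Mazur's lemma, convex blocks of
the weakly null `x - y` can be made summably small, so the same convex blocks of `x`, which lie
in `Y`, are small perturbations of a convex block sequence of `y` and inherit convex block
shiftability, while they still differ from `x` by a weakly null sequence.
-/

open Finset

structure IsBlocking (F : ℕ → Finset ℕ) : Prop where
  nonempty : ∀ j, (F j).Nonempty
  lt_of_mem_succ : ∀ j, ∀ i ∈ F j, ∀ i' ∈ F (j + 1), i < i'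

structure IsConvexBlocking (F : ℕ → Finset ℕ) (lam : ℕ → ℝ) : Prop extends IsBlocking F where
  nonneg : ∀ i, 0 ≤ lam i
  sum_eq_one : ∀ j, ∑ i ∈ F j, lam i = 1

def blockSum {M : Type*} [AddCommMonoid M] [Module ℝ M] (F : ℕ → Finset ℕ) (lam : ℕ → ℝ)
    (x : ℕ → M) (j : ℕ) : M :=
  ∑ i ∈ F j, lam i • x i

namespace IsBlocking

variable {F : ℕ → Finset ℕ}

theorem lt_of_lt (hF : IsBlocking F) {j j' i i' : ℕ} (h : j < j') (hi : i ∈ F j)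
    (hi' : i' ∈ F j') : i < i' := by
  induction j', h using Nat.le_induction generalizing i' with
  | base => exact hF.lt_of_mem_succ j i hi i' hi'
  | succ j' _ ih =>
    obtain ⟨i₀, hi₀⟩ := hF.nonempty j'
    exact (ih hi₀).trans (hF.lt_of_mem_succ j' i₀ hi₀ i' hi')

theorem le_of_mem (hF : IsBlocking F) {j i : ℕ} (hi : i ∈ F j) : j ≤ i := by
  induction j generalizing i with
  | zero => exact Nat.zero_le i
  | succ j ih =>
    obtain ⟨i₀, hi₀⟩ := hF.nonempty j
    exact (ih hi₀).trans_lt (hF.lt_of_mem_succ j i₀ hi₀ i hi)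

theorem eq_of_mem (hF : IsBlocking F) {j j' i : ℕ} (hi : i ∈ F j) (hi' : i ∈ F j') : j = j' := by
  by_contra hne
  rcases Nat.lt_or_gt_of_ne hne with h | h
  · exact (hF.lt_of_lt h hi hi').false
  · exact (hF.lt_of_lt h hi' hi).false

theorem pairwiseDisjoint (hF : IsBlocking F) (s : Set ℕ) : s.PairwiseDisjoint F :=
  fun _ _ _ _ hne => disjoint_left.2 fun _ hi hi' => hne (hF.eq_of_mem hi hi')

theorem shift (hF : IsBlocking F) (p : ℕ) : IsBlocking fun j => F (j + p) :=
  ⟨fun _ => hF.nonempty _, fun _ _ hi _ hi' => hF.lt_of_lt (by omega) hi hi'⟩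

theorem min'_mono (hF : IsBlocking F) {m n : ℕ} (hmn : m ≤ n) :
    (F m).min' (hF.nonempty m) ≤ (F n).min' (hF.nonempty n) := by
  rcases hmn.eq_or_lt with rfl | h
  · exact le_rfl
  · exact (hF.lt_of_lt h (min'_mem _ _) (min'_mem _ _)).le

theorem range_min'_inter (hF : IsBlocking F) (m k : ℕ) :
    range ((F m).min' (hF.nonempty m)) ∩ F k = if k < m then F k else ∅ := by
  ext i
  simp only [mem_inter, mem_range]
  split_ifs with hkm
  · exact ⟨And.right, fun hi => ⟨hF.lt_of_lt hkm hi (min'_mem _ _), hi⟩⟩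
  · refine ⟨fun ⟨hlt, hi⟩ => absurd hlt (not_lt.2 ?_), fun h => absurd h (notMem_empty i)⟩
    rcases (not_lt.1 hkm).eq_or_lt with rfl | h
    · exact min'_le _ _ hi
    · exact (hF.lt_of_lt h (min'_mem _ _) hi).le

theorem exists_weights (hF : IsBlocking F) (ω : ℕ → ℕ → ℝ) (hω : ∀ j, ∀ i ∈ F j, 0 ≤ ω j i) :
    ∃ lam : ℕ → ℝ, (∀ i, 0 ≤ lam i) ∧ ∀ j, ∀ i ∈ F j, lam i = ω j i := by
  classical
  refine ⟨fun i => if h : ∃ j, i ∈ F j then ω h.choose i else 0, fun i => ?_, fun j i hi => ?_⟩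
  · dsimp only
    split_ifs with h
    exacts [hω _ _ h.choose_spec, le_rfl]
  · have h : ∃ j, i ∈ F j := ⟨j, hi⟩
    simp only [dif_pos h, hF.eq_of_mem h.choose_spec hi]

end IsBlocking

section blockSum

variable {M M' : Type*} [AddCommMonoid M] [Module ℝ M] [AddCommMonoid M'] [Module ℝ M']
  {F : ℕ → Finset ℕ} {lam : ℕ → ℝ}

theorem map_blockSum {G : Type*} [FunLike G M M'] [LinearMapClass G ℝ M M'] (g : G)
    (x : ℕ → M) (j : ℕ) : g (blockSum F lam x j) = blockSum F lam (fun i => g (x i)) j := by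
  simp only [blockSum, map_sum, map_smul]

theorem blockSum_sub {N : Type*} [AddCommGroup N] [Module ℝ N] (x y : ℕ → N) (j : ℕ) :
    blockSum F lam x j - blockSum F lam y j = blockSum F lam (fun i => x i - y i) j := by
  simp only [blockSum, smul_sub, sum_sub_distrib]

theorem blockSum_singleton {φ : ℕ → ℕ} (x : ℕ → M) :
    blockSum (fun j => {φ j}) (fun _ => 1) x = x ∘ φ := by
  ext j
  simp [blockSum]

end blockSum

theorem isConvexBlocking_singleton {φ : ℕ → ℕ} (hφ : StrictMono φ) :
    IsConvexBlocking (fun j => {φ j}) (fun _ => 1) where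
  nonempty _ := singleton_nonempty _
  lt_of_mem_succ j i hi i' hi' := by
    rw [mem_singleton] at hi hi'
    exact hi ▸ hi' ▸ hφ j.lt_succ_self
  nonneg _ := zero_le_one
  sum_eq_one _ := sum_singleton _ _

namespace IsConvexBlocking

variable {F : ℕ → Finset ℕ} {lam : ℕ → ℝ}

theorem shift (hF : IsConvexBlocking F lam) (p : ℕ) :
    IsConvexBlocking (fun j => F (j + p)) lam :=
  { hF.toIsBlocking.shift p with
    nonneg := hF.nonneg
    sum_eq_one := fun j => hF.sum_eq_one (j + p) }

theorem blockSum_mem (hF : IsConvexBlocking F lam) {s : Set E} (hs : Convex ℝ s) {x : ℕ → E}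
    {k : ℕ} (hx : ∀ i ∈ F k, x i ∈ s) : blockSum F lam x k ∈ s :=
  hs.sum_mem (fun i _ => hF.nonneg i) (hF.sum_eq_one k) hx

theorem norm_blockSum_le (hF : IsConvexBlocking F lam) {x : ℕ → E} {k : ℕ} {r : ℝ}
    (hx : ∀ i ∈ F k, ‖x i‖ ≤ r) : ‖blockSum F lam x k‖ ≤ r :=
  mem_closedBall_zero_iff.1 <|
    hF.blockSum_mem (convex_closedBall 0 r) fun i hi => mem_closedBall_zero_iff.2 (hx i hi)

theorem le_apply_blockSum (hF : IsConvexBlocking F lam) (f : StrongDual ℝ E) {c : ℝ}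
    {x : ℕ → E} (hx : ∀ i, c ≤ f (x i)) (k : ℕ) : c ≤ f (blockSum F lam x k) :=
  hF.blockSum_mem (convex_halfSpace_ge f.toLinearMap.isLinear c) fun i _ => hx i

theorem tendsto_blockSum (hF : IsConvexBlocking F lam) {x : ℕ → E} {l : E}
    (hx : Tendsto x atTop (𝓝 l)) : Tendsto (blockSum F lam x) atTop (𝓝 l) := by
  rw [Metric.nhds_basis_closedBall.tendsto_right_iff] at hx ⊢
  intro ε hε
  obtain ⟨N, hN⟩ := eventually_atTop.1 (hx ε hε)
  exact eventually_atTop.2 ⟨N, fun k hk =>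
    hF.blockSum_mem (convex_closedBall l ε) fun i hi => hN i (hk.trans (hF.le_of_mem hi))⟩

theorem blockSum_blockSum {G : ℕ → Finset ℕ} {mu : ℕ → ℝ} (hG : IsConvexBlocking G mu)
    (hF : IsConvexBlocking F lam) (x : ℕ → E) :
    ∃ H ν, IsConvexBlocking H ν ∧ blockSum G mu (blockSum F lam x) = blockSum H ν x := by
  obtain ⟨ν, hν0, hν⟩ := hF.exists_weights (fun j i => mu j * lam i)
    fun j i _ => mul_nonneg (hG.nonneg j) (hF.nonneg i)
  refine ⟨fun k => (G k).biUnion F, ν, ⟨⟨fun k => ?_, fun k i hi i' hi' => ?_⟩, hν0, fun k => ?_⟩,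
    funext fun k => ?_⟩
  · obtain ⟨j, hj⟩ := hG.nonempty k
    exact ⟨_, mem_biUnion.2 ⟨j, hj, (hF.nonempty j).choose_spec⟩⟩
  · obtain ⟨j, hj, hij⟩ := mem_biUnion.1 hi
    obtain ⟨j', hj', hij'⟩ := mem_biUnion.1 hi'
    exact hF.lt_of_lt (hG.lt_of_mem_succ k j hj j' hj') hij hij'
  · rw [sum_biUnion (hF.pairwiseDisjoint _), ← hG.sum_eq_one k]
    refine sum_congr rfl fun j _ => ?_
    rw [sum_congr rfl fun i hi => hν j i hi, ← mul_sum, hF.sum_eq_one, mul_one]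
  · rw [blockSum, blockSum, sum_biUnion (hF.pairwiseDisjoint _)]
    refine sum_congr rfl fun j _ => ?_
    rw [blockSum, smul_sum]
    exact sum_congr rfl fun i hi => by rw [hν j i hi, mul_smul]

end IsConvexBlocking

theorem isConvexBlockSeq_iff {w x : ℕ → E} :
    IsConvexBlockSeq w x ↔ ∃ F lam, IsConvexBlocking F lam ∧ w = blockSum F lam x := by
  constructor
  · rintro ⟨F, lam, hne, hlt, h0, h1, hw⟩
    exact ⟨F, lam, ⟨⟨hne, hlt⟩, h0, h1⟩, funext hw⟩
  · rintro ⟨F, lam, ⟨⟨hne, hlt⟩, h0, h1⟩, rfl⟩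
    exact ⟨F, lam, hne, hlt, h0, h1, fun _ => rfl⟩

theorem IsConvexBlocking.isConvexBlockSeq {F : ℕ → Finset ℕ} {lam : ℕ → ℝ}
    (hF : IsConvexBlocking F lam) (x : ℕ → E) : IsConvexBlockSeq (blockSum F lam x) x :=
  isConvexBlockSeq_iff.2 ⟨F, lam, hF, rfl⟩

theorem isConvexBlockSeq_comp (x : ℕ → E) {φ : ℕ → ℕ} (hφ : StrictMono φ) :
    IsConvexBlockSeq (x ∘ φ) x := by
  simpa only [blockSum_singleton] using (isConvexBlocking_singleton hφ).isConvexBlockSeq x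

theorem IsConvexBlockSeq.trans {u v w : ℕ → E} (huv : IsConvexBlockSeq u v)
    (hvw : IsConvexBlockSeq v w) : IsConvexBlockSeq u w := by
  obtain ⟨G, mu, hG, rfl⟩ := isConvexBlockSeq_iff.1 huv
  obtain ⟨F, lam, hF, rfl⟩ := isConvexBlockSeq_iff.1 hvw
  obtain ⟨H, ν, hH, hGF⟩ := hG.blockSum_blockSum hF w
  exact hGF ▸ hH.isConvexBlockSeq w

theorem IsConvexBlockSeq.map {E' : Type*} [NormedAddCommGroup E'] [NormedSpace ℝ E']
    (g : E' →ₗ[ℝ] E) {w x : ℕ → E'} (h : IsConvexBlockSeq w x) :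
    IsConvexBlockSeq (fun n => g (w n)) (fun n => g (x n)) := by
  obtain ⟨F, lam, hF, rfl⟩ := isConvexBlockSeq_iff.1 h
  simpa only [map_blockSum] using hF.isConvexBlockSeq fun n => g (x n)

def BasisProjBound (K : ℝ) (x : ℕ → E) : Prop :=
  ∀ m n : ℕ, m ≤ n → ∀ a : ℕ → ℝ,
    ‖∑ i ∈ range m, a i • x i‖ ≤ K * ‖∑ i ∈ range n, a i • x i‖

theorem isBasicSeq_iff {x : ℕ → E} {K : ℝ} :
    IsBasicSeq x K ↔ (∀ n, x n ≠ 0) ∧ 1 ≤ K ∧ BasisProjBound K x :=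
  Iff.rfl

theorem IsBlocking.sum_smul_blockSum {F : ℕ → Finset ℕ} (hF : IsBlocking F) (lam : ℕ → ℝ)
    (x : ℕ → E) (a : ℕ → ℝ) {m n : ℕ} (hmn : m ≤ n) :
    ∑ k ∈ range m, a k • blockSum F lam x k =
      ∑ i ∈ range ((F m).min' (hF.nonempty m)),
        (∑ k ∈ range n, if i ∈ F k then a k * lam i else 0) • x i := by
  symm
  calc _ = ∑ k ∈ range n, ∑ i ∈ range ((F m).min' (hF.nonempty m)),
          if i ∈ F k then (a k * lam i) • x i else 0 := by
        simp only [sum_smul, ite_smul, zero_smul]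
        exact sum_comm
    _ = ∑ k ∈ range n, if k ∈ range m then a k • blockSum F lam x k else 0 := by
        refine sum_congr rfl fun k _ => ?_
        simp only [sum_ite_mem, hF.range_min'_inter, mem_range]
        split_ifs
        · simp only [blockSum, smul_sum, mul_smul]
        · rfl
    _ = _ := by
        rw [sum_ite_mem, inter_eq_right.2 (range_subset_range.2 hmn)]

theorem BasisProjBound.blockSum {K : ℝ} {x : ℕ → E} (hx : BasisProjBound K x)
    {F : ℕ → Finset ℕ} {lam : ℕ → ℝ} (hF : IsBlocking F) :
    BasisProjBound K (blockSum F lam x) := by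
  intro m n hmn a
  rw [hF.sum_smul_blockSum lam x a hmn, hF.sum_smul_blockSum lam x a le_rfl]
  exact hx _ _ (hF.min'_mono hmn) _

theorem BasisProjBound.of_isConvexBlockSeq {K : ℝ} {x v : ℕ → E} (hx : BasisProjBound K x)
    (hv : IsConvexBlockSeq v x) : BasisProjBound K v := by
  obtain ⟨F, lam, hF, rfl⟩ := isConvexBlockSeq_iff.1 hv
  exact hx.blockSum hF.toIsBlocking

theorem BasisProjBound.norm_smul_le {K : ℝ} {x : ℕ → E} (hx : BasisProjBound K x) (a : ℕ → ℝ)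
    {k m : ℕ} (hkm : k < m) :
    ‖a k • x k‖ ≤ 2 * K * ‖∑ i ∈ range m, a i • x i‖ := by
  have h : a k • x k =
      ∑ i ∈ range (k + 1), a i • x i - ∑ i ∈ range k, a i • x i := by
    rw [sum_range_succ, add_sub_cancel_left]
  calc ‖a k • x k‖
      ≤ ‖∑ i ∈ range (k + 1), a i • x i‖ + ‖∑ i ∈ range k, a i • x i‖ :=
        h ▸ norm_sub_le _ _
    _ ≤ K * ‖∑ i ∈ range m, a i • x i‖ + K * ‖∑ i ∈ range m, a i • x i‖ :=
        add_le_add (hx _ _ hkm _) (hx _ _ hkm.le _)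
    _ = 2 * K * ‖∑ i ∈ range m, a i • x i‖ := by ring

namespace SeqEquiv

variable {L M : ℝ} {u v w : ℕ → E}

theorem symm (hL : 0 < L) (h : SeqEquiv L u v) : SeqEquiv L v u := fun m a => by
  obtain ⟨h₁, h₂⟩ := h m a
  constructor
  · calc 1 / L * ‖∑ i ∈ range m, a i • v i‖
        ≤ 1 / L * (L * ‖∑ i ∈ range m, a i • u i‖) := by gcongr
      _ = ‖∑ i ∈ range m, a i • u i‖ := by field_simp
  · calc ‖∑ i ∈ range m, a i • u i‖
        = L * (1 / L * ‖∑ i ∈ range m, a i • u i‖) := by field_simp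
      _ ≤ L * ‖∑ i ∈ range m, a i • v i‖ := by gcongr

theorem trans (hM : 0 ≤ M) (huv : SeqEquiv L u v) (hvw : SeqEquiv M v w) :
    SeqEquiv (L * M) u w := fun m a => by
  obtain ⟨h₁, h₂⟩ := huv m a
  obtain ⟨h₃, h₄⟩ := hvw m a
  constructor
  · calc 1 / (L * M) * ‖∑ i ∈ range m, a i • u i‖
        = 1 / M * (1 / L * ‖∑ i ∈ range m, a i • u i‖) := by ring
      _ ≤ 1 / M * ‖∑ i ∈ range m, a i • v i‖ := by gcongr
      _ ≤ ‖∑ i ∈ range m, a i • w i‖ := h₃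
  · calc ‖∑ i ∈ range m, a i • w i‖ ≤ M * ‖∑ i ∈ range m, a i • v i‖ := h₄
      _ ≤ M * (L * ‖∑ i ∈ range m, a i • u i‖) := by gcongr
      _ = L * M * ‖∑ i ∈ range m, a i • u i‖ := by ring

end SeqEquiv

theorem BasisProjBound.of_seqEquiv {K L : ℝ} {u v : ℕ → E} (hv : BasisProjBound K v)
    (hK : 0 ≤ K) (hL : 0 < L) (h : SeqEquiv L v u) : BasisProjBound (L * K * L) u := by
  intro m n hmn a
  calc ‖∑ i ∈ range m, a i • u i‖ ≤ L * ‖∑ i ∈ range m, a i • v i‖ := (h m a).2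
    _ ≤ L * (K * ‖∑ i ∈ range n, a i • v i‖) := by gcongr; exact hv m n hmn a
    _ = L * K * (L * (1 / L * ‖∑ i ∈ range n, a i • v i‖)) := by field_simp
    _ ≤ L * K * L * ‖∑ i ∈ range n, a i • u i‖ := by
        rw [mul_assoc (L * K)]; gcongr; exact (h n a).1

/-- The coefficients of `∑ i ∈ range m, a i • v i` are at most `2K / δ` times its norm, so the
perturbation moves this norm by at most half of it. -/
theorem seqEquiv_two_of_sum_norm_sub_le {K δ : ℝ} (hK : 0 < K) (hδ : 0 < δ) {u v : ℕ → E}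
    (hv : BasisProjBound K v) (hlb : ∀ k, δ ≤ ‖v k‖)
    (hu : ∀ n, ∑ k ∈ range n, ‖u k - v k‖ ≤ δ / (4 * K)) : SeqEquiv 2 v u := by
  intro m a
  set A := ‖∑ i ∈ range m, a i • v i‖
  have hcoef : ∀ k < m, |a k| ≤ 2 * K / δ * A := fun k hk => by
    have h := (mul_le_mul_of_nonneg_left (hlb k) (abs_nonneg (a k))).trans
      ((norm_smul (a k) (v k)).symm ▸ hv.norm_smul_le a hk)
    rw [div_mul_eq_mul_div, le_div_iff₀ hδ]
    linarith
  have hdiff : ‖∑ i ∈ range m, a i • u i - ∑ i ∈ range m, a i • v i‖ ≤ A / 2 :=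
    calc _ = ‖∑ i ∈ range m, a i • (u i - v i)‖ := by
          simp only [smul_sub, sum_sub_distrib]
      _ ≤ ∑ i ∈ range m, 2 * K / δ * A * ‖u i - v i‖ := by
          refine (norm_sum_le _ _).trans (sum_le_sum fun i hi => ?_)
          rw [norm_smul, Real.norm_eq_abs]
          gcongr
          exact hcoef i (mem_range.1 hi)
      _ ≤ 2 * K / δ * A * (δ / (4 * K)) := by
          rw [← mul_sum]
          gcongr
          exact hu m
      _ = A / 2 := by field_simp; ring
  have h₁ := norm_sub_norm_le (∑ i ∈ range m, a i • v i)
    (∑ i ∈ range m, a i • u i)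
  have h₂ := norm_sub_norm_le (∑ i ∈ range m, a i • u i)
    (∑ i ∈ range m, a i • v i)
  rw [norm_sub_rev] at h₁
  constructor <;> linarith

theorem sum_range_div_two_pow_succ_le {T : ℝ} (hT : 0 ≤ T) (n : ℕ) :
    ∑ k ∈ range n, T / 2 ^ (k + 1) ≤ T :=
  calc ∑ k ∈ range n, T / 2 ^ (k + 1) = T / 2 * ∑ k ∈ range n, (1 / 2 : ℝ) ^ k := by
        rw [mul_sum]
        exact sum_congr rfl fun k _ => by rw [one_div, inv_pow, pow_succ]; field_simp
    _ ≤ T / 2 * 2 := by gcongr; exact sum_geometric_two_le n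
    _ = T := by ring

/-- The `j`-th block of a convex blocking starts at an index `≥ j`, so every convex block sequence
of `u` is as close to the corresponding one of `v` as `u` is to `v`. -/
theorem convexBlockShiftable_of_norm_sub_le {K δ L : ℝ} {u v : ℕ → E} (hK : 1 ≤ K)
    (hδ : 0 < δ) (hL : 0 < L) (hv : BasisProjBound K v)
    (hlb : ∀ V, IsConvexBlockSeq V v → ∀ k, δ ≤ ‖V k‖)
    (hshift : ∀ V, IsConvexBlockSeq V v → UnifShiftEquiv L V)
    (hu : ∀ j, ‖u j - v j‖ ≤ δ / (4 * K) / 2 ^ (j + 1)) : ConvexBlockShiftable u := by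
  have hK₀ : 0 < K := one_pos.trans_le hK
  have hT : 0 ≤ δ / (4 * K) := by positivity
  have herr : ∀ G mu, IsConvexBlocking G mu → ∀ k,
      ‖blockSum G mu u k - blockSum G mu v k‖ ≤ δ / (4 * K) / 2 ^ (k + 1) := by
    intro G mu hG k
    rw [blockSum_sub]
    refine hG.norm_blockSum_le fun i hi => (hu i).trans ?_
    have := hG.le_of_mem hi
    gcongr
    · exact one_le_two
  have hblock : ∀ G mu, IsConvexBlocking G mu → SeqEquiv 2 (blockSum G mu v) (blockSum G mu u) :=
    fun G mu hG => seqEquiv_two_of_sum_norm_sub_le hK₀ hδ (hv.blockSum hG.toIsBlocking)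
      (hlb _ (hG.isConvexBlockSeq v)) fun n =>
        (sum_le_sum fun k _ => herr G mu hG k).trans (sum_range_div_two_pow_succ_le hT n)
  have hvu : SeqEquiv 2 v u := by
    simpa only [blockSum_singleton, Function.comp_id] using
      hblock _ _ (isConvexBlocking_singleton strictMono_id)
  have hne : ∀ j, u j ≠ 0 := fun j hj => by
    have h₁ := hu j
    have h₂ := hlb v (isConvexBlockSeq_comp v strictMono_id) j
    have h₃ : δ / (4 * K) / 2 ^ (j + 1) < δ :=
      calc _ ≤ δ / (4 * K) := div_le_self hT (one_le_pow₀ one_le_two)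
        _ < δ := div_lt_self hδ (by linarith)
    rw [hj, zero_sub, norm_neg] at h₁
    exact (h₂.trans h₁).not_gt h₃
  refine ⟨⟨2 * K * 2, hne, by linarith, hv.of_seqEquiv hK₀.le two_pos hvu⟩, 2 * L * 2,
    by positivity, id, strictMono_id, fun W hW p => ?_⟩
  obtain ⟨G, mu, hG, rfl⟩ := isConvexBlockSeq_iff.1 hW
  exact (((hblock _ _ (hG.shift p)).symm two_pos).trans hL.le
    (hshift _ (hG.isConvexBlockSeq v) p)).trans two_pos.le (hblock G mu hG)

theorem ConvexBlockShiftable.of_comp_linearIsometry {E' : Type*} [NormedAddCommGroup E']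
    [NormedSpace ℝ E'] (ι : E' →ₗᵢ[ℝ] E) {u : ℕ → E'}
    (h : ConvexBlockShiftable fun n => ι (u n)) : ConvexBlockShiftable u := by
  have hnorm (s : Finset ℕ) (a : ℕ → ℝ) (x : ℕ → E') :
      ‖∑ i ∈ s, a i • ι (x i)‖ = ‖∑ i ∈ s, a i • x i‖ := by
    simp only [← map_smul, ← map_sum, LinearIsometry.norm_map]
  obtain ⟨⟨K, hne, hK, hb⟩, L, hL, φ, hφ, hshift⟩ := h
  refine ⟨⟨K, fun n hn => hne n (by simp only [hn, map_zero]), hK, fun m n hmn a => ?_⟩,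
    L, hL, φ, hφ, fun W hW p m a => ?_⟩
  · simpa only [hnorm] using hb m n hmn a
  · simpa only [LinearIsometry.coe_toLinearMap, hnorm] using hshift _ (hW.map ι.toLinearMap) p m a

theorem WeakLim.comp {x : ℕ → E} {z : E} (h : WeakLim x z) {φ : ℕ → ℕ}
    (hφ : Tendsto φ atTop atTop) : WeakLim (x ∘ φ) z :=
  fun f => (h f).comp hφ

theorem WeakLim.of_weakLim_sub {x w : ℕ → E} {z : E} (hw : WeakLim w z)
    (h : WeakLim (fun n => x n - w n) 0) : WeakLim x z := fun f => by
  simpa using (h f).add (hw f)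

theorem WeakCauchySeq.of_weakLim_sub {x w : ℕ → E} (hx : WeakCauchySeq x)
    (h : WeakLim (fun n => x n - w n) 0) : WeakCauchySeq w := fun f => by
  obtain ⟨l, hl⟩ := hx f
  exact ⟨l, by simpa using hl.sub (h f)⟩

theorem WeakCauchySeq.comp_continuousLinearMap {E' : Type*} [NormedAddCommGroup E']
    [NormedSpace ℝ E'] {x : ℕ → E} (hx : WeakCauchySeq x) (T : E →L[ℝ] E') :
    WeakCauchySeq fun n => T (x n) :=
  fun f => hx (f.comp T)

theorem WeakCauchySeq.exists_eventually_le_apply {w : ℕ → E} (hw : WeakCauchySeq w)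
    (h : ¬WeakLim w 0) : ∃ (f : StrongDual ℝ E) (c : ℝ), 0 < c ∧ ∀ᶠ n in atTop, c ≤ f (w n) := by
  obtain ⟨f, hf⟩ : ∃ f : StrongDual ℝ E, ¬Tendsto (fun n => f (w n)) atTop (𝓝 0) := by
    simpa [WeakLim] using h
  obtain ⟨l, hl⟩ := hw f
  have hl0 : l ≠ 0 := by rintro rfl; exact hf hl
  rcases hl0.lt_or_gt with hneg | hpos
  · refine ⟨-f, -l / 2, by linarith, ?_⟩
    simpa using hl.neg.eventually (eventually_ge_nhds (by linarith : -l / 2 < -l))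
  · exact ⟨f, l / 2, by linarith, hl.eventually (eventually_ge_nhds (by linarith))⟩

theorem mem_closure_of_weakLim {s : Set E} (hs : Convex ℝ s) {x : ℕ → E} {z : E}
    (hx : ∀ n, x n ∈ s) (h : WeakLim x z) : z ∈ closure s := by
  by_contra hz
  obtain ⟨f, u, hfs, hfz⟩ := geometric_hahn_banach_closed_point hs.closure isClosed_closure hz
  obtain ⟨n, hn⟩ := ((h f).eventually (eventually_gt_nhds hfz)).exists
  exact (hfs _ (subset_closure (hx n))).not_gt hn

theorem Submodule.exists_weakLim_of_weakLim_coe (Y : Submodule ℝ E) (hY : IsClosed (Y : Set E))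
    {x : ℕ → Y} {z : E} (h : WeakLim (fun n => (x n : E)) z) : ∃ z' : Y, WeakLim x z' := by
  have hz : z ∈ Y := hY.closure_subset (mem_closure_of_weakLim Y.convex (fun n => (x n).2) h)
  refine ⟨⟨z, hz⟩, fun g => ?_⟩
  obtain ⟨G, hG, -⟩ := exists_extension_norm_eq Y g
  have hGz : G z = g ⟨z, hz⟩ := hG ⟨z, hz⟩
  simpa only [hG, hGz] using h G

theorem WeakCauchySeq.weakLim_sub_blockSum {x : ℕ → E} (hx : WeakCauchySeq x)
    {F : ℕ → Finset ℕ} {lam : ℕ → ℝ} (hF : IsConvexBlocking F lam) {φ : ℕ → ℕ}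
    (hφ : StrictMono φ) : WeakLim (fun n => x n - blockSum F lam (x ∘ φ) n) 0 := fun f => by
  obtain ⟨l, hl⟩ := hx f
  have hblock : Tendsto (fun n => f (blockSum F lam (x ∘ φ) n)) atTop (𝓝 l) := by
    simp only [map_blockSum]
    exact hF.tendsto_blockSum (hl.comp hφ.tendsto_atTop)
  simpa using hl.sub hblock

/-- Mazur: `0` lies in the weak, hence in the norm, closure of the convex hull of a tail. -/
theorem WeakLim.exists_sum_smul_norm_le {z : ℕ → E} (hz : WeakLim z 0) {ε : ℝ} (hε : 0 < ε)
    (N : ℕ) :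
    ∃ (s : Finset ℕ) (lam : ℕ → ℝ), (∀ i ∈ s, N ≤ i) ∧ (∀ i ∈ s, 0 ≤ lam i) ∧
      ∑ i ∈ s, lam i = 1 ∧ ‖∑ i ∈ s, lam i • z i‖ ≤ ε := by
  have h0 : (0 : E) ∈ closure (convexHull ℝ (Set.range fun i => z (i + N))) :=
    mem_closure_of_weakLim (convex_convexHull ℝ _)
      (fun n => subset_convexHull ℝ _ ⟨n, rfl⟩)
      (hz.comp (tendsto_add_atTop_nat N))
  obtain ⟨p, hp, hp0⟩ := Metric.mem_closure_iff.1 h0 ε hε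
  rw [convexHull_range_eq_exists_affineCombination] at hp
  obtain ⟨t, w, hw0, hw1, rfl⟩ := hp
  have hinj : Set.InjOn (· + N) t := fun _ _ _ _ h => Nat.add_right_cancel h
  refine ⟨t.image (· + N), fun i => w (i - N), by simp, by simpa using hw0, ?_, ?_⟩
  · simpa [sum_image hinj] using hw1
  · rw [sum_image hinj]
    simp only [Nat.add_sub_cancel]
    rw [← affineCombination_eq_linear_combination _ _ _ hw1, ← dist_zero_left]
    exact hp0.le

theorem WeakLim.exists_convexBlocking_norm_blockSum_le {z : ℕ → E} (hz : WeakLim z 0)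
    {ε : ℕ → ℝ} (hε : ∀ j, 0 < ε j) :
    ∃ F lam, IsConvexBlocking F lam ∧ ∀ j, ‖blockSum F lam z j‖ ≤ ε j := by
  choose s ω hsN hω0 hω1 hωz using fun N j => hz.exists_sum_smul_norm_le (hε j) N
  -- the `j`-th block is taken beyond `b j`, which exceeds all indices of the earlier blocks
  let b : ℕ → ℕ := fun j => Nat.rec 0 (fun j bj => (s bj j).sup id + 1) j
  have hF : IsBlocking fun j => s (b j) j := by
    refine ⟨fun j => nonempty_of_sum_ne_zero (hω1 _ _ ▸ one_ne_zero), fun j i hi i' hi' => ?_⟩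
    exact (le_sup (f := id) hi).trans_lt (hsN _ _ i' hi')
  obtain ⟨lam, hlam0, hlam⟩ := hF.exists_weights (fun j => ω (b j) j) fun j i hi => hω0 _ _ i hi
  refine ⟨fun j => s (b j) j, lam, ⟨hF, hlam0, fun j => ?_⟩, fun j => ?_⟩
  · rw [sum_congr rfl (hlam j)]
    exact hω1 _ _
  · rw [blockSum, sum_congr rfl fun i hi => by rw [hlam j i hi]]
    exact hωz _ _

theorem exists_convexBlockShiftable_blockSum {x w : ℕ → E} (hx : WeakCauchySeq x)
    (hxz : ¬∃ z, WeakLim x z) (hw : ConvexBlockShiftable w)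
    (hxw : WeakLim (fun n => x n - w n) 0) :
    ∃ F lam φ, IsConvexBlocking F lam ∧ StrictMono φ ∧
      ConvexBlockShiftable (blockSum F lam (x ∘ φ)) := by
  obtain ⟨⟨K, hKw⟩, L, hL, φ, hφ, hshift⟩ := hw
  obtain ⟨-, hK, hwb⟩ := isBasicSeq_iff.1 hKw
  obtain ⟨f, c, hc, hfw⟩ := (hx.of_weakLim_sub hxw).exists_eventually_le_apply
    fun h0 => hxz ⟨0, h0.of_weakLim_sub hxw⟩
  obtain ⟨N, hN⟩ := eventually_atTop.1 hfw
  have hN' : StrictMono (· + N) := strictMono_id.add_const N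
  set y := w ∘ (φ ∘ (· + N))
  have hy : ∀ i, c ≤ f (y i) := fun i => hN _ ((Nat.le_add_left N i).trans hφ.le_apply)
  have hf : 0 < ‖f‖ := norm_pos_iff.2 fun hf0 => by simpa [hf0] using hc.trans_le (hy 0)
  have hδ : 0 < c / ‖f‖ := div_pos hc hf
  have hlb : ∀ V, IsConvexBlockSeq V y → ∀ k, c / ‖f‖ ≤ ‖V k‖ := fun V hV k => by
    obtain ⟨G, mu, hG, rfl⟩ := isConvexBlockSeq_iff.1 hV
    rw [div_le_iff₀ hf, mul_comm]
    exact (hG.le_apply_blockSum f hy k).trans ((Real.le_norm_self _).trans (f.le_opNorm _))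
  obtain ⟨F, lam, hF, hFz⟩ :=
    (hxw.comp (hφ.comp hN').tendsto_atTop).exists_convexBlocking_norm_blockSum_le
      (ε := fun j => c / ‖f‖ / (4 * K) / 2 ^ (j + 1)) fun j => by positivity
  have hvy := hF.isConvexBlockSeq y
  refine ⟨F, lam, φ ∘ (· + N), hF, hφ.comp hN',
    convexBlockShiftable_of_norm_sub_le hK hδ hL
      ((hwb.of_isConvexBlockSeq (isConvexBlockSeq_comp w (hφ.comp hN'))).blockSum hF.toIsBlocking)
      (fun V hV => hlb V (hV.trans hvy))
      (fun V hV => hshift V ((hV.trans hvy).trans (isConvexBlockSeq_comp (w ∘ φ) hN')))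
      fun j => ?_⟩
  rw [blockSum_sub]
  exact hFz j

theorem propertySU_of_closedSubspace_general
    {X : Type*} [NormedAddCommGroup X] [NormedSpace ℝ X]
    (hsu : PropertySU X) (Y : Submodule ℝ X) (hY : IsClosed (Y : Set X)) :
    PropertySU Y := by
  intro x hx hxz
  have hxX := hx.comp_continuousLinearMap Y.subtypeL
  have hxXz : ¬∃ z, WeakLim (fun n => (x n : X)) z := fun ⟨_, hz⟩ =>
    hxz (Y.exists_weakLim_of_weakLim_coe hY hz)
  obtain ⟨w, hw, hxw⟩ := hsu _ hxX hxXz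
  obtain ⟨F, lam, φ, hF, hφ, hu⟩ := exists_convexBlockShiftable_blockSum hxX hxXz hw hxw
  refine ⟨blockSum F lam (x ∘ φ),
    ConvexBlockShiftable.of_comp_linearIsometry Y.subtypeₗᵢ ?_, hx.weakLim_sub_blockSum hF hφ⟩
  convert hu using 1
  exact funext fun n => map_blockSum Y.subtypeₗᵢ (x ∘ φ) n

/-- property (su) passes to closed linear subspaces. -/
theorem propertySU_of_closedSubspace
    {X : Type*} [NormedAddCommGroup X] [NormedSpace ℝ X] [CompleteSpace X]
    (hsu : PropertySU X) (Y : Submodule ℝ X) (hY : IsClosed (Y : Set X)) :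
    PropertySU Y :=
  propertySU_of_closedSubspace_general hsu Y hY
end
end
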